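/- arXiv:math/9901037 — 2 statements merged into one kernel-verified Lean document; each statement's English description precedes it below -/
import Mathlib

section
/- Let R be a sequence of rectangles whose last rectangle is a single column of height μ_L, and let (ν,J) ∈ RC(λ^t;R^t). Define δ̄(ν,J) as follows: set ℓ̄^{(0)} = μ_L; inductively select in (ν,J)^{(k)} a singular string of minimal length ℓ̄^{(k)} with ℓ̄^{(k−1)} ≤ ℓ̄^{(k)}; let r = rk(ν,J) be the least k for which no such string exists (set ℓ̄^{(k)} = ∞ for k ≥ r); then shorten each selected string by one, keeping it singular, and leave all other strings unchanged. Then: (a) λ^t_r > λ^t_{r+1}, so that removing the corner cell in column r of λ yields a partition ρ ⋖ λ; (b) δ̄(ν,J) is a well-defined element of RC(ρ^t; R̄^t), where R̄ is R with one cell removed from the last column; and (c) δ̄ is injective. -/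
namespace KSS

/-- A rectangle: `(η, μ)` = (width, height). -/
abbrev Rect := ℕ × ℕ

/-- Total number of cells of a sequence of rectangles. -/
def sizeR (R : List Rect) : ℕ := (R.map (fun r => r.1 * r.2)).sum

/-- `Q_n(ρ)`: number of cells of the partition `ρ` (a multiset of parts) in the
first `n` columns. -/
def Qn (n : ℕ) (ρ : Multiset ℕ) : ℕ := (ρ.map (fun p => min p n)).sum

/-- `m_n(ρ)`: multiplicity of the part `n` in `ρ`. -/
def mpart (n : ℕ) (ρ : Multiset ℕ) : ℕ := ρ.count n

/-- `ξ^{(k)}(R)`: the partition whose parts are the heights of the rectangles of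
`R` of width `k`. -/
def xiR (R : List Rect) (k : ℕ) : Multiset ℕ :=
  ((R.filter (fun r => r.1 == k)).map Prod.snd : List ℕ)

/-- The vacancy numbers `P^{(k)}_n(ν)` for a configuration `ν` relative to the
rectangle data `R` (convention `ν 0 = ∅`). -/
def vacZ (R : List Rect) (ν : ℕ → Multiset ℕ) (k n : ℕ) : ℤ :=
  (Qn n (ν (k-1)) : ℤ) - 2 * (Qn n (ν k) : ℤ) + (Qn n (ν (k+1)) : ℤ) + (Qn n (xiR R k) : ℤ)

/-- The vacancy number as a natural number. -/
def natVac (R : List Rect) (ν : ℕ → Multiset ℕ) (k n : ℕ) : ℕ := (vacZ R ν k n).toNat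

/-- `Σ_{j>k} λ^t_j = Σ_{p ∈ λ} max(p-k,0)` for a partition `λ` (multiset of parts). -/
def sumTail (lam : Multiset ℕ) (k : ℕ) : ℕ := (lam.map (fun p => p - k)).sum

/-- `λ^t_k`: number of parts of `λ` of size at least `k`. -/
def lamT (lam : Multiset ℕ) (k : ℕ) : ℕ := (lam.filter (fun p => k ≤ p)).card

/-- `ν` is a `(λ^t; R^t)`-configuration:
`|ν^{(k)}| = Σ_{j>k} λ^t_j − Σ_a μ_a max(η_a − k, 0)` for all `k ≥ 1`. -/
def IsConfig (lam : Multiset ℕ) (R : List Rect) (ν : ℕ → Multiset ℕ) : Prop :=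
  ν 0 = 0 ∧ (∀ k, 0 ∉ ν k) ∧
  ∀ k, 1 ≤ k → (ν k).sum + (R.map (fun r => r.2 * (r.1 - k))).sum = sumTail lam k

/-- Admissibility: all vacancy numbers are nonnegative. -/
def Admissible (R : List Rect) (ν : ℕ → Multiset ℕ) : Prop :=
  ∀ k n, 1 ≤ k → 1 ≤ n → 0 ≤ vacZ R ν k n

/-- `J` is a rigging of `ν` relative to `R`: for each `k, n ≥ 1`, `J k n` is the
multiset of labels of the strings of length `n` in the `k`-th rigged partition;
there are `m_n(ν^{(k)})` of them, each between `0` and `P^{(k)}_n(ν)`. -/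
def IsRigging (R : List Rect) (ν : ℕ → Multiset ℕ) (J : ℕ → ℕ → Multiset ℕ) : Prop :=
  (∀ k n, (k = 0 ∨ n = 0) → J k n = 0) ∧
  (∀ k n, 1 ≤ k → 1 ≤ n →
    (J k n).card = mpart n (ν k) ∧ ∀ x ∈ J k n, (x : ℤ) ≤ vacZ R ν k n)

/-- Rigged configuration. -/
def IsRC (lam : Multiset ℕ) (R : List Rect) (ν : ℕ → Multiset ℕ)
    (J : ℕ → ℕ → Multiset ℕ) : Prop :=
  IsConfig lam R ν ∧ Admissible R ν ∧ IsRigging R ν J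

/-- The set `RC(λ^t; R^t)` of rigged configurations. -/
def RCset (lam : Multiset ℕ) (R : List Rect) :
    Set ((ℕ → Multiset ℕ) × (ℕ → ℕ → Multiset ℕ)) :=
  {p | IsRC lam R p.1 p.2}

/-- `α^{(k)}_n`: size of the `n`-th column of `ν^{(k)}`. -/
def alphaC (ν : ℕ → Multiset ℕ) (k n : ℕ) : ℕ := ((ν k).filter (fun p => n ≤ p)).card

/-- `cc(ν) = Σ_{k,n ≥ 1} α^{(k)}_n (α^{(k)}_n − α^{(k+1)}_n)`. -/
noncomputable def ccConf (ν : ℕ → Multiset ℕ) : ℤ :=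
  ∑ᶠ k : ℕ, ∑ᶠ n : ℕ,
    (if 1 ≤ k ∧ 1 ≤ n then
      (alphaC ν k n : ℤ) * ((alphaC ν k n : ℤ) - (alphaC ν (k+1) n : ℤ)) else 0)

/-- `cc(ν,J) = cc(ν) + Σ_{k,n ≥ 1} |J^{(k)}_n|`. -/
noncomputable def ccRC (ν : ℕ → Multiset ℕ) (J : ℕ → ℕ → Multiset ℕ) : ℤ :=
  ccConf ν + ∑ᶠ k : ℕ, ∑ᶠ n : ℕ, ((J k n).sum : ℤ)

/-- There is a singular string of length `n` in the `k`-th rigged partition. -/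
def Singular (R : List Rect) (ν : ℕ → Multiset ℕ) (J : ℕ → ℕ → Multiset ℕ)
    (k n : ℕ) : Prop :=
  1 ≤ n ∧ natVac R ν k n ∈ J k n
def lastRect (R : List Rect) : Rect := (R.getLast?).getD (0,0)

/-- `R̂`: split off the last column of the last rectangle. -/
def Rhat (R : List Rect) : List Rect :=
  if (lastRect R).1 ≤ 1 then R
  else R.dropLast ++ [((lastRect R).1 - 1, (lastRect R).2), (1, (lastRect R).2)]

/-- The configuration of `ĵ(ν,J)`: add a part of size `μ_L` to each of the
first `η_L − 1` partitions. -/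
def jHatNu (R : List Rect) (ν : ℕ → Multiset ℕ) : ℕ → Multiset ℕ := fun k =>
  if 1 ≤ k ∧ k < (lastRect R).1 then ν k + {(lastRect R).2} else ν k

/-- The rigging of `ĵ(ν,J)`: the added strings of length `μ_L` are singular. -/
def jHatJ (R : List Rect) (ν : ℕ → Multiset ℕ) (J : ℕ → ℕ → Multiset ℕ) :
    ℕ → ℕ → Multiset ℕ := fun k n =>
  if 1 ≤ k ∧ k < (lastRect R).1 ∧ n = (lastRect R).2
  then J k n + {natVac (Rhat R) (jHatNu R ν) k n} else J k n
open scoped Classical in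
/-- The lengths `ℓ̄^{(k)}` of the singular strings selected by the algorithm
`δ̄`: `ℓ̄^{(0)} = μ_L`, and `ℓ̄^{(k)}` is the minimal length of a singular string
in the `k`-th rigged partition that is `≥ ℓ̄^{(k−1)}` (`⊤` if none exists). -/
noncomputable def ellBar (R : List Rect) (ν : ℕ → Multiset ℕ)
    (J : ℕ → ℕ → Multiset ℕ) (μL : ℕ) : ℕ → ℕ∞
  | 0 => (μL : ℕ∞)
  | k+1 => sInf {m : ℕ∞ | ∃ n : ℕ, m = (n : ℕ∞) ∧
      ellBar R ν J μL k ≤ (n : ℕ∞) ∧ Singular R ν J (k+1) n}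

/-- `R̄`: remove one cell from the last (single-column) rectangle. -/
def Rbar (R : List Rect) : List Rect :=
  R.dropLast ++ (if (lastRect R).2 ≤ 1 then [] else [(1, (lastRect R).2 - 1)])

open scoped Classical in
/-- The configuration of `δ̄(ν,J)`: each selected singular string is shortened
by one. -/
noncomputable def dbNu (R : List Rect) (ν : ℕ → Multiset ℕ)
    (J : ℕ → ℕ → Multiset ℕ) (μL : ℕ) : ℕ → Multiset ℕ := fun k =>
  if k = 0 then ν k
  else if ellBar R ν J μL k = ⊤ then ν k
  else
    let n := (ellBar R ν J μL k).toNat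
    ((ν k).erase n) + (if n ≤ 1 then 0 else {n - 1})

open scoped Classical in
/-- The rigging of `δ̄(ν,J)`: the shortened strings stay singular, all other
labels are unchanged. -/
noncomputable def dbJ (R : List Rect) (ν : ℕ → Multiset ℕ)
    (J : ℕ → ℕ → Multiset ℕ) (μL : ℕ) : ℕ → ℕ → Multiset ℕ := fun k n =>
  if k = 0 ∨ n = 0 then J k n
  else if ellBar R ν J μL k = (n : ℕ∞) then (J k n).erase (natVac R ν k n)
  else if ellBar R ν J μL k = ((n+1 : ℕ) : ℕ∞) then
    (J k n) + {natVac (Rbar R) (dbNu R ν J μL) k n}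
  else J k n

/-- `δ̄` on pairs. -/
noncomputable def dbPair (R : List Rect) (μL : ℕ)
    (p : (ℕ → Multiset ℕ) × (ℕ → ℕ → Multiset ℕ)) :
    (ℕ → Multiset ℕ) × (ℕ → ℕ → Multiset ℕ) :=
  (dbNu R p.1 p.2 μL, dbJ R p.1 p.2 μL)


/-! ### Auxiliary lemmas -/

section Aux
open Multiset

/-- Size of the `n`-th column of `ρ`. -/
def acol (ρ : Multiset ℕ) (n : ℕ) : ℕ := (ρ.filter (fun p => n ≤ p)).card

lemma Qn_zero (ρ : Multiset ℕ) : Qn 0 ρ = 0 := by simp [Qn]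

lemma Qn_add (n : ℕ) (s t : Multiset ℕ) : Qn n (s + t) = Qn n s + Qn n t := by
  simp [Qn]

lemma Qn_cons (n a : ℕ) (s : Multiset ℕ) : Qn n (a ::ₘ s) = min a n + Qn n s := by
  simp [Qn]

lemma Qn_singleton (n a : ℕ) : Qn n ({a} : Multiset ℕ) = min a n := by simp [Qn]

lemma Qn_nil (n : ℕ) : Qn n (0 : Multiset ℕ) = 0 := by simp [Qn]

lemma Qn_succ (n : ℕ) (ρ : Multiset ℕ) : Qn (n+1) ρ = Qn n ρ + acol ρ (n+1) := by
  induction ρ using Multiset.induction with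
  | empty => simp [Qn, acol]
  | cons a s ih =>
    unfold acol at *
    rw [Qn_cons, Qn_cons, Multiset.filter_cons]
    by_cases h : n + 1 ≤ a
    · rw [if_pos h, Multiset.card_add, Multiset.card_singleton]
      omega
    · rw [if_neg h, zero_add]
      omega

lemma acol_succ_add_count (ρ : Multiset ℕ) (n : ℕ) :
    acol ρ n = acol ρ (n+1) + ρ.count n := by
  unfold acol
  induction ρ using Multiset.induction with
  | empty => simp
  | cons a s ih =>
    rw [Multiset.filter_cons, Multiset.filter_cons, Multiset.count_cons]
    by_cases h1 : n ≤ a <;> by_cases h2 : n + 1 ≤ a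
    · have hne : ¬ n = a := by omega
      rw [if_pos h1, if_pos h2, if_neg hne, Multiset.card_add, Multiset.card_add,
        Multiset.card_singleton]
      omega
    · have heq : n = a := by omega
      rw [if_pos h1, if_neg h2, if_pos heq, zero_add, Multiset.card_add,
        Multiset.card_singleton]
      omega
    · exact absurd h2 (by omega)
    · have hne : ¬ n = a := by omega
      rw [if_neg h1, if_neg h2, if_neg hne, zero_add, zero_add]
      omega

lemma acol_antitone (ρ : Multiset ℕ) {m n : ℕ} (h : m ≤ n) : acol ρ n ≤ acol ρ m := by
  apply Multiset.card_le_card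
  apply Multiset.monotone_filter_right
  intro p hp
  omega

lemma Qn_sum {n : ℕ} {ρ : Multiset ℕ} (h : ∀ p ∈ ρ, p ≤ n) : Qn n ρ = ρ.sum := by
  unfold Qn
  rw [show ρ.sum = (ρ.map id).sum by rw [Multiset.map_id]]
  congr 1
  apply Multiset.map_congr rfl
  intro p hp
  simp [min_eq_left (h p hp)]

lemma Qn_erase {ρ : Multiset ℕ} {a : ℕ} (h : a ∈ ρ) (n : ℕ) :
    Qn n ρ = min a n + Qn n (ρ.erase a) := by
  conv_lhs => rw [← Multiset.cons_erase h]
  rw [Qn_cons]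

/-- Indicator used in vacancy-number change formulas. -/
def indZ (e : ℕ∞) (n : ℕ) : ℤ := if e ≤ (n : ℕ∞) then 1 else 0

lemma indZ_top (n : ℕ) : indZ ⊤ n = 0 := by simp [indZ]

lemma indZ_coe (m n : ℕ) : indZ (m : ℕ∞) n = if m ≤ n then 1 else 0 := by
  simp [indZ, Nat.cast_le]

lemma Qn_shorten {ρ : Multiset ℕ} {m : ℕ} (hm : m ∈ ρ) (h1 : 1 ≤ m) {n : ℕ} (hn : 1 ≤ n) :
    (Qn n (ρ.erase m + (if m ≤ 1 then 0 else {m-1})) : ℤ)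
      = (Qn n ρ : ℤ) - indZ (m : ℕ∞) n := by
  rw [Qn_add, Qn_erase hm n, indZ_coe]
  by_cases h : m ≤ 1
  · rw [if_pos h, Qn_nil]
    have hm1 : m = 1 := by omega
    subst hm1
    rw [if_pos hn]
    have : min 1 n = 1 := by omega
    rw [this]
    push_cast
    ring
  · rw [if_neg h, Qn_singleton]
    split_ifs with hmn
    · have e1 : min m n = m := by omega
      have e2 : min (m-1) n = m - 1 := by omega
      rw [e1, e2]
      push_cast [Nat.cast_sub (by omega : 1 ≤ m)]
      ring
    · have e1 : min m n = n := by omega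
      have e2 : min (m-1) n = n := by omega
      rw [e1, e2]
      push_cast
      ring

lemma vacZ_zero (R : List Rect) (ν : ℕ → Multiset ℕ) (k : ℕ) : vacZ R ν k 0 = 0 := by
  simp [vacZ, Qn_zero]

lemma vacZ_succ (R : List Rect) (ν : ℕ → Multiset ℕ) (k n : ℕ) :
    vacZ R ν k (n+1) = vacZ R ν k n +
      ((acol (ν (k-1)) (n+1) : ℤ) - 2 * (acol (ν k) (n+1) : ℤ)
        + (acol (ν (k+1)) (n+1) : ℤ) + (acol (xiR R k) (n+1) : ℤ)) := by
  simp only [vacZ, Qn_succ]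
  push_cast
  ring

lemma vacZ_concave (R : List Rect) (ν : ℕ → Multiset ℕ) (k n : ℕ)
    (h : (ν k).count (n+1) = 0) :
    vacZ R ν k (n+1+1) + vacZ R ν k n ≤ 2 * vacZ R ν k (n+1) := by
  have e2 := vacZ_succ R ν k (n+1)
  have e1 := vacZ_succ R ν k n
  have hA : acol (ν k) (n+1) = acol (ν k) (n+1+1) := by
    have := acol_succ_add_count (ν k) (n+1)
    omega
  have h1 : acol (ν (k-1)) (n+1+1) ≤ acol (ν (k-1)) (n+1) := acol_antitone _ (by omega)
  have h2 : acol (ν (k+1)) (n+1+1) ≤ acol (ν (k+1)) (n+1) := acol_antitone _ (by omega)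
  have h3 : acol (xiR R k) (n+1+1) ≤ acol (xiR R k) (n+1) := acol_antitone _ (by omega)
  have c1 : (acol (ν (k-1)) (n+1+1) : ℤ) ≤ (acol (ν (k-1)) (n+1) : ℤ) := by exact_mod_cast h1
  have c2 : (acol (ν (k+1)) (n+1+1) : ℤ) ≤ (acol (ν (k+1)) (n+1) : ℤ) := by exact_mod_cast h2
  have c3 : (acol (xiR R k) (n+1+1) : ℤ) ≤ (acol (xiR R k) (n+1) : ℤ) := by exact_mod_cast h3
  have cA : (acol (ν k) (n+1) : ℤ) = (acol (ν k) (n+1+1) : ℤ) := by exact_mod_cast hA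
  linarith

end Aux


section Ell
open Multiset

variable {R : List Rect} {ν : ℕ → Multiset ℕ} {J : ℕ → ℕ → Multiset ℕ} {μL : ℕ}

lemma ellBar_zero : ellBar R ν J μL 0 = (μL : ℕ∞) := rfl

lemma ellBar_succ (k : ℕ) : ellBar R ν J μL (k+1) =
    sInf {m : ℕ∞ | ∃ n : ℕ, m = (n : ℕ∞) ∧ ellBar R ν J μL k ≤ (n : ℕ∞) ∧
      Singular R ν J (k+1) n} := rfl

lemma ellBar_le {k m : ℕ} (hs : Singular R ν J (k+1) m)
    (hle : ellBar R ν J μL k ≤ (m:ℕ∞)) :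
    ellBar R ν J μL (k+1) ≤ (m : ℕ∞) := by
  rw [ellBar_succ]
  exact sInf_le ⟨m, rfl, hle, hs⟩

lemma ellBar_mono : Monotone (ellBar R ν J μL) := by
  apply monotone_nat_of_le_succ
  intro k
  rw [ellBar_succ]
  refine le_sInf ?_
  rintro b ⟨n, rfl, h1, -⟩
  exact h1

lemma ellBar_spec {k : ℕ} (h : ellBar R ν J μL (k+1) ≠ ⊤) :
    ∃ m : ℕ, ellBar R ν J μL (k+1) = (m : ℕ∞) ∧ ellBar R ν J μL k ≤ (m:ℕ∞) ∧
      Singular R ν J (k+1) m := by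
  have hSne : {m : ℕ∞ | ∃ n : ℕ, m = (n : ℕ∞) ∧ ellBar R ν J μL k ≤ (n : ℕ∞) ∧
      Singular R ν J (k+1) n}.Nonempty := by
    by_contra hc
    rw [Set.not_nonempty_iff_eq_empty] at hc
    rw [ellBar_succ, hc, sInf_empty] at h
    exact h rfl
  obtain ⟨m0, n0, rfl, hn1, hn2⟩ := hSne
  set T := {n : ℕ | ellBar R ν J μL k ≤ (n:ℕ∞) ∧ Singular R ν J (k+1) n} with hT
  have hTne : T.Nonempty := ⟨n0, hn1, hn2⟩
  have hmem := Nat.sInf_mem hTne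
  refine ⟨sInf T, ?_, hmem.1, hmem.2⟩
  apply le_antisymm
  · rw [ellBar_succ]
    exact sInf_le ⟨sInf T, rfl, hmem.1, hmem.2⟩
  · rw [ellBar_succ]
    refine le_sInf ?_
    rintro b ⟨n, rfl, h1, h2⟩
    exact_mod_cast Nat.sInf_le (show n ∈ T from ⟨h1, h2⟩)

lemma ellBar_pos (hμ : 1 ≤ μL) (k : ℕ) : (1:ℕ∞) ≤ ellBar R ν J μL k := by
  calc (1:ℕ∞) ≤ (μL : ℕ∞) := by exact_mod_cast hμ
  _ = ellBar R ν J μL 0 := rfl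
  _ ≤ ellBar R ν J μL k := ellBar_mono (Nat.zero_le k)

lemma mpart_eq_count (n : ℕ) (ρ : Multiset ℕ) : mpart n ρ = ρ.count n := rfl

lemma singular_count (hrig : IsRigging R ν J) {k n : ℕ} (hk : 1 ≤ k)
    (hs : Singular R ν J k n) : 0 < (ν k).count n := by
  have h1 := (hrig.2 k n hk hs.1).1
  have h2 : 0 < (J k n).card := by
    rw [Multiset.card_pos_iff_exists_mem]
    exact ⟨natVac R ν k n, hs.2⟩
  rw [h1, mpart_eq_count] at h2
  exact h2

lemma singular_of_zero (hrig : IsRigging R ν J) {k n : ℕ} (hk : 1 ≤ k) (hn : 1 ≤ n)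
    (hc : 0 < (ν k).count n) (hP : vacZ R ν k n = 0) : Singular R ν J k n := by
  obtain ⟨hcard, hbound⟩ := hrig.2 k n hk hn
  have hpos : 0 < (J k n).card := by rw [hcard, mpart_eq_count]; exact hc
  obtain ⟨x, hx⟩ := Multiset.card_pos_iff_exists_mem.1 hpos
  have hxb := hbound x hx
  rw [hP] at hxb
  have hx0 : x = 0 := by omega
  refine ⟨hn, ?_⟩
  have hnv : natVac R ν k n = 0 := by unfold natVac; rw [hP]; rfl
  rw [hnv, ← hx0]
  exact hx

lemma label_le_sub_one (hrig : IsRigging R ν J) {k n : ℕ} (hk : 1 ≤ k) (hn : 1 ≤ n)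
    (hns : ¬ Singular R ν J k n) {x : ℕ} (hx : x ∈ J k n) :
    (x:ℤ) ≤ vacZ R ν k n - 1 := by
  have hb := (hrig.2 k n hk hn).2 x hx
  have hne : (x:ℤ) ≠ vacZ R ν k n := by
    intro he
    apply hns
    refine ⟨hn, ?_⟩
    have hnv : natVac R ν k n = x := by
      unfold natVac
      rw [← he]
      simp
    rwa [hnv]
  omega

end Ell


section Key
open Multiset

variable {lam : Multiset ℕ} {R : List Rect} {ν : ℕ → Multiset ℕ}
  {J : ℕ → ℕ → Multiset ℕ} {μL : ℕ}

lemma ellBar_spec' {k : ℕ} (hk : 1 ≤ k) (h : ellBar R ν J μL k ≠ ⊤) :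
    ∃ m : ℕ, ellBar R ν J μL k = (m : ℕ∞) ∧ ellBar R ν J μL (k-1) ≤ (m:ℕ∞) ∧
      Singular R ν J k m := by
  obtain ⟨j, rfl⟩ : ∃ j, k = j + 1 := ⟨k-1, by omega⟩
  simpa using ellBar_spec h

lemma ellBar_le' {k m : ℕ} (hk : 1 ≤ k) (hs : Singular R ν J k m)
    (hle : ellBar R ν J μL (k-1) ≤ (m:ℕ∞)) :
    ellBar R ν J μL k ≤ (m : ℕ∞) := by
  obtain ⟨j, rfl⟩ : ∃ j, k = j + 1 := ⟨k-1, by omega⟩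
  refine ellBar_le hs ?_
  simpa using hle

lemma acol_const_of_count (ρ : Multiset ℕ) :
    ∀ d j, (∀ i, j ≤ i → i < j + d → ρ.count i = 0) → acol ρ j = acol ρ (j + d) := by
  intro d
  induction d with
  | zero => intro j _; rfl
  | succ d ih =>
    intro j h
    have h1 : acol ρ j = acol ρ (j+1) := by
      have h2 := acol_succ_add_count ρ j
      have hc := h j le_rfl (by omega)
      omega
    rw [h1]
    have h3 := ih (j+1) (fun i hi1 hi2 => h i (by omega) (by omega))
    rw [h3]
    congr 1
    omega

lemma vacZ_zero_succ (R : List Rect) (ν : ℕ → Multiset ℕ) (k : ℕ) {j : ℕ} (hj : 1 ≤ j)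
    (hcount : (ν k).count j = 0) (h0 : vacZ R ν k j = 0)
    (hprev : 0 ≤ vacZ R ν k (j-1)) (hsucc : 0 ≤ vacZ R ν k (j+1)) :
    vacZ R ν k (j+1) = 0 ∧ vacZ R ν k (j-1) = 0 := by
  obtain ⟨i, rfl⟩ : ∃ i, j = i + 1 := ⟨j-1, by omega⟩
  have hcc := vacZ_concave R ν k i hcount
  simp only [Nat.add_sub_cancel] at *
  rw [h0] at hcc
  constructor <;> linarith

lemma mem_xiR_one (hR : R ≠ []) (hlast : lastRect R = (1, μL)) :
    μL ∈ xiR R 1 := by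
  have h1 : R.getLast? = some (R.getLast hR) := List.getLast?_eq_getLast hR
  have h2 : R.getLast hR = (1, μL) := by
    unfold lastRect at hlast
    rw [h1] at hlast
    simpa using hlast
  have h3 : (1, μL) ∈ R := h2 ▸ List.getLast_mem hR
  have h4 : (1, μL) ∈ R.filter (fun r => r.1 == 1) := by
    rw [List.mem_filter]
    exact ⟨h3, by simp⟩
  unfold xiR
  rw [Multiset.mem_coe]
  exact List.mem_map.2 ⟨(1, μL), h4, rfl⟩

/-- **Key lemma**: between consecutive selected string lengths the vacancy
numbers are strictly positive. -/
lemma keyF1 (hadm : Admissible R ν) (hrig : IsRigging R ν J)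
    (hR : R ≠ []) (hlast : lastRect R = (1, μL)) (hμ : 1 ≤ μL)
    {k n : ℕ} (hk : 1 ≤ k) (hn : 1 ≤ n) (hprev : ellBar R ν J μL (k-1) ≤ (n:ℕ∞))
    (hlt : (n:ℕ∞) < ellBar R ν J μL k) : 1 ≤ vacZ R ν k n := by
  -- the previous selected length, as a natural number
  obtain ⟨ℓp, hℓp, hℓpn⟩ : ∃ m : ℕ, ellBar R ν J μL (k-1) = (m:ℕ∞) ∧ m ≤ n := by
    have hne : ellBar R ν J μL (k-1) ≠ ⊤ := ne_top_of_le_ne_top (ENat.coe_ne_top n) hprev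
    set e := ellBar R ν J μL (k-1) with he
    lift e to ℕ using hne with m hm
    exact ⟨m, rfl, by exact_mod_cast hprev⟩
  have hℓp1 : 1 ≤ ℓp := by
    have h1 := ellBar_pos (R := R) (ν := ν) (J := J) hμ (k-1)
    rw [hℓp] at h1
    exact_mod_cast h1
  -- the part of length ℓp one level down (or in ξ for k = 1)
  have hprevcount : 0 < (ν (k-1)).count ℓp + (xiR R k).count ℓp := by
    rcases Nat.lt_or_ge k 2 with hk2 | hk2
    · -- k = 1
      have hk1 : k = 1 := by omega
      subst hk1
      have h0 : ellBar R ν J μL 0 = (μL : ℕ∞) := rfl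
      have hμℓ : μL = ℓp := by
        rw [h0] at hℓp
        exact_mod_cast hℓp
      have hmem := mem_xiR_one hR hlast
      rw [hμℓ] at hmem
      have := Multiset.count_pos.2 hmem
      omega
    · -- k ≥ 2
      have hne : ellBar R ν J μL (k-1) ≠ ⊤ := by rw [hℓp]; exact ENat.coe_ne_top ℓp
      obtain ⟨m, hm, -, hsing⟩ := ellBar_spec' (by omega : 1 ≤ k - 1) hne
      have hmℓ : m = ℓp := by rw [hℓp] at hm; exact_mod_cast hm.symm
      have := singular_count hrig (by omega : 1 ≤ k - 1) hsing
      rw [hmℓ] at this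
      omega
  -- nonnegativity of vacancy numbers
  have hPge : ∀ j : ℕ, 0 ≤ vacZ R ν k j := by
    intro j
    cases j with
    | zero => rw [vacZ_zero]
    | succ i => exact hadm k (i+1) hk (by omega)
  by_contra hcon
  have hPn : vacZ R ν k n = 0 := by have := hPge n; omega
  -- no singular strings in the window
  have NS : ∀ j : ℕ, 1 ≤ j → ℓp ≤ j → ((j:ℕ∞) < ellBar R ν J μL k) →
      vacZ R ν k j = 0 → (ν k).count j = 0 := by
    intro j hj1 hjp hjlt hPj
    by_contra hc
    have hsing : Singular R ν J k j := singular_of_zero hrig hk hj1 (by omega) hPj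
    have hle : ellBar R ν J μL k ≤ (j:ℕ∞) := by
      refine ellBar_le' hk hsing ?_
      rw [hℓp]
      exact_mod_cast hjp
    exact absurd hle (not_le.2 hjlt)
  -- upward propagation of zeros
  obtain ⟨u, hun, hℓpu, hPu, hcu⟩ :
      ∃ u : ℕ, n ≤ u ∧ ℓp < u ∧ (∀ j, n ≤ j → j ≤ u → vacZ R ν k j = 0) ∧
        (∀ j, n ≤ j → j < u → (ν k).count j = 0) := by
    cases hLtop : ellBar R ν J μL k with
    | top =>
      have up : ∀ d : ℕ, vacZ R ν k (n+d) = 0 ∧ (ν k).count (n+d) = 0 := by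
        intro d
        induction d with
        | zero =>
          refine ⟨hPn, NS n hn hℓpn ?_ hPn⟩
          rw [hLtop]
          exact_mod_cast WithTop.coe_lt_top n
        | succ d ih =>
          have hz := vacZ_zero_succ R ν k (by omega : 1 ≤ n + d) ih.2 ih.1
            (hPge (n+d-1)) (hPge (n+d+1))
          refine ⟨hz.1, NS (n+d+1) (by omega) (by omega) ?_ hz.1⟩
          rw [hLtop]
          exact_mod_cast WithTop.coe_lt_top (n+d+1)
      refine ⟨max n ℓp + 1, by omega, by omega, ?_, ?_⟩
      · intro j hj _
        have := (up (j - n)).1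
        rwa [show n + (j - n) = j by omega] at this
      · intro j hj _
        have := (up (j - n)).2
        rwa [show n + (j - n) = j by omega] at this
    | coe L =>
      have hnL : n < L := by
        rw [hLtop] at hlt
        exact_mod_cast hlt
      have up : ∀ d : ℕ, n + d ≤ L →
          vacZ R ν k (n+d) = 0 ∧ (n + d < L → (ν k).count (n+d) = 0) := by
        intro d
        induction d with
        | zero =>
          intro _
          refine ⟨hPn, fun _ => NS n hn hℓpn ?_ hPn⟩
          rw [hLtop]
          exact_mod_cast hnL
        | succ d ih =>
          intro hle
          obtain ⟨ih1, ih2⟩ := ih (by omega)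
          have hcnt : (ν k).count (n+d) = 0 := ih2 (by omega)
          have hz := vacZ_zero_succ R ν k (by omega : 1 ≤ n + d) hcnt ih1
            (hPge (n+d-1)) (hPge (n+d+1))
          refine ⟨hz.1, fun hlt' => NS (n+d+1) (by omega) (by omega) ?_ hz.1⟩
          rw [hLtop]
          exact_mod_cast hlt'
      refine ⟨L, by omega, by omega, ?_, ?_⟩
      · intro j hj1 hj2
        have := (up (j - n) (by omega)).1
        rwa [show n + (j - n) = j by omega] at this
      · intro j hj1 hj2
        have := (up (j - n) (by omega)).2 (by omega)
        rwa [show n + (j - n) = j by omega] at this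
  -- downward propagation of zeros
  obtain ⟨t, ht1, htℓp, hdown, hPt1⟩ :
      ∃ t : ℕ, 1 ≤ t ∧ t ≤ ℓp ∧
        (∀ j, t ≤ j → j ≤ n → vacZ R ν k j = 0 ∧ (ν k).count j = 0) ∧
        vacZ R ν k (t-1) = 0 := by
    have main : ∀ d : ℕ, d < n →
        ((∃ t : ℕ, 1 ≤ t ∧ t ≤ ℓp ∧
          (∀ j, t ≤ j → j ≤ n → vacZ R ν k j = 0 ∧ (ν k).count j = 0) ∧
          vacZ R ν k (t-1) = 0) ∨
        (∀ j, n - d ≤ j → j ≤ n → vacZ R ν k j = 0 ∧ (ν k).count j = 0)) := by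
      intro d
      induction d with
      | zero =>
        intro _
        right
        intro j hj1 hj2
        have hjn : j = n := by omega
        rw [hjn]
        exact ⟨hPn, NS n hn hℓpn hlt hPn⟩
      | succ d ih =>
        intro hdn
        rcases ih (by omega) with h | h
        · exact Or.inl h
        · set s := n - d with hs
          have hs2 : 2 ≤ s := by omega
          obtain ⟨hPs, hcs⟩ := h s (by omega) (by omega)
          have hz := vacZ_zero_succ R ν k (by omega : 1 ≤ s) hcs hPs (hPge (s-1)) (hPge (s+1))
          have hPs1 : vacZ R ν k (s-1) = 0 := hz.2
          by_cases hc : (ν k).count (s-1) = 0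
          · right
            intro j hj1 hj2
            by_cases hjs : s ≤ j
            · exact h j hjs hj2
            · have hj : j = s - 1 := by omega
              rw [hj]
              exact ⟨hPs1, hc⟩
          · left
            by_cases hℓps : ℓp ≤ s - 1
            · exfalso
              have hsing : Singular R ν J k (s-1) :=
                singular_of_zero hrig hk (by omega) (by omega) hPs1
              have hle : ellBar R ν J μL k ≤ ((s-1 : ℕ):ℕ∞) := by
                refine ellBar_le' hk hsing ?_
                rw [hℓp]
                exact_mod_cast hℓps
              have hlt2 : ((s-1:ℕ):ℕ∞) < ellBar R ν J μL k :=
                lt_of_le_of_lt (by exact_mod_cast (by omega : s - 1 ≤ n)) hlt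
              exact absurd hle (not_le.2 hlt2)
            · exact ⟨s, by omega, by omega, h, hPs1⟩
    rcases main (n-1) (by omega) with h | h
    · exact h
    · refine ⟨1, le_rfl, hℓp1, ?_, ?_⟩
      · intro j hj1 hj2
        exact h j (by omega) hj2
      · show vacZ R ν k 0 = 0
        exact vacZ_zero R ν k
  -- the contradiction
  have hPz : ∀ j, t ≤ j → j ≤ u → vacZ R ν k j = 0 := by
    intro j h1 h2
    by_cases hjn : j ≤ n
    · exact (hdown j h1 hjn).1
    · exact hPu j (by omega) h2
  have hcz : ∀ j, t ≤ j → j < u → (ν k).count j = 0 := by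
    intro j h1 h2
    by_cases hjn : j ≤ n
    · exact (hdown j h1 hjn).2
    · exact hcu j (by omega) h2
  have hAconst : ∀ j, t ≤ j → j ≤ u → acol (ν k) j = acol (ν k) u := by
    intro j h1 h2
    have := acol_const_of_count (ν k) (u - j) j
      (fun i hi1 hi2 => hcz i (by omega) (by omega))
    rwa [show j + (u - j) = u by omega] at this
  have hstep : ∀ j, t - 1 ≤ j → j < u →
      (acol (ν (k-1)) (j+1) : ℤ) + (acol (xiR R k) (j+1) : ℤ)
        + (acol (ν (k+1)) (j+1) : ℤ) = 2 * (acol (ν k) u : ℤ) := by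
    intro j hj1 hj2
    have hsucc := vacZ_succ R ν k j
    have hPj : vacZ R ν k j = 0 := by
      by_cases h : t ≤ j
      · exact hPz j h (by omega)
      · have hjt : j = t - 1 := by omega
        rw [hjt]
        exact hPt1
    have hPj1 : vacZ R ν k (j+1) = 0 := hPz (j+1) (by omega) (by omega)
    have hAj : acol (ν k) (j+1) = acol (ν k) u := hAconst (j+1) (by omega) (by omega)
    rw [hPj, hPj1, hAj] at hsucc
    linarith
  have hBs := hstep (ℓp - 1) (by omega) (by omega)
  rw [show ℓp - 1 + 1 = ℓp by omega] at hBs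
  have hBs1 := hstep ℓp (by omega) (by omega)
  have m1 := acol_succ_add_count (ν (k-1)) ℓp
  have m2 := acol_succ_add_count (xiR R k) ℓp
  have m3 := acol_succ_add_count (ν (k+1)) ℓp
  omega

end Key


section Arith
open Multiset

variable {lam : Multiset ℕ} {R : List Rect} {ν : ℕ → Multiset ℕ}
  {J : ℕ → ℕ → Multiset ℕ} {μL : ℕ}

/-- `Σ_a μ_a (η_a - k)_+`. -/
def cRect (R : List Rect) (k : ℕ) : ℕ := (R.map (fun r => r.2 * (r.1 - k))).sum

/-- `Σ_a μ_a χ(k ≤ η_a)`. -/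
def eRect (R : List Rect) (k : ℕ) : ℕ := (R.map (fun r => if k ≤ r.1 then r.2 else 0)).sum

lemma xiR_nil (k : ℕ) : xiR [] k = 0 := rfl

lemma xiR_cons (a : Rect) (l : List Rect) (k : ℕ) :
    xiR (a :: l) k = (if a.1 = k then ({a.2} : Multiset ℕ) else 0) + xiR l k := by
  unfold xiR
  rw [List.filter_cons]
  by_cases h : a.1 = k
  · simp [h]
  · simp [h]

lemma cRect_succ (R : List Rect) (k : ℕ) : cRect R k = cRect R (k+1) + eRect R (k+1) := by
  induction R with
  | nil => rfl
  | cons a l ih =>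
    unfold cRect eRect at *
    rw [List.map_cons, List.sum_cons, List.map_cons, List.sum_cons,
      List.map_cons, List.sum_cons]
    by_cases h : k + 1 ≤ a.1
    · rw [if_pos h, show a.1 - k = (a.1 - (k+1)) + 1 by omega, Nat.mul_succ]
      omega
    · rw [if_neg h, show a.1 - k = 0 by omega, show a.1 - (k+1) = 0 by omega]
      omega

lemma eRect_succ (R : List Rect) (k : ℕ) : eRect R k = eRect R (k+1) + (xiR R k).sum := by
  induction R with
  | nil => rfl
  | cons a l ih =>
    unfold eRect at *
    rw [List.map_cons, List.sum_cons, List.map_cons, List.sum_cons, xiR_cons,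
      Multiset.sum_add]
    by_cases h : a.1 = k
    · rw [if_pos h, if_pos (by omega), if_neg (by omega)]
      simp only [Multiset.sum_singleton]
      omega
    · rw [if_neg h]
      simp only [Multiset.sum_zero]
      by_cases h2 : k ≤ a.1
      · rw [if_pos h2, if_pos (by omega)]
        omega
      · rw [if_neg h2, if_neg (by omega)]
        omega

lemma lamT_eq_acol (k : ℕ) : lamT lam k = acol lam k := rfl

lemma sumTail_succ (lam : Multiset ℕ) (k : ℕ) :
    sumTail lam k = sumTail lam (k+1) + lamT lam (k+1) := by
  rw [lamT_eq_acol]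
  unfold sumTail acol
  induction lam using Multiset.induction with
  | empty => simp
  | cons p s ih =>
    rw [Multiset.map_cons, Multiset.sum_cons, Multiset.map_cons, Multiset.sum_cons,
      Multiset.filter_cons]
    by_cases h : k + 1 ≤ p
    · rw [if_pos h, Multiset.card_add, Multiset.card_singleton]
      omega
    · rw [if_neg h, zero_add]
      omega

lemma sumTail_zero_eq (lam : Multiset ℕ) : sumTail lam 0 = lam.sum := by
  simp [sumTail]

lemma sumTail_le_sum (lam : Multiset ℕ) (k : ℕ) : sumTail lam k ≤ lam.sum := by
  unfold sumTail
  induction lam using Multiset.induction with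
  | empty => simp
  | cons p s ih =>
    rw [Multiset.map_cons, Multiset.sum_cons, Multiset.sum_cons]
    omega

lemma sumTail_eq_zero (lam : Multiset ℕ) {k : ℕ} (h : ∀ p ∈ lam, p ≤ k) :
    sumTail lam k = 0 := by
  unfold sumTail
  induction lam using Multiset.induction with
  | empty => simp
  | cons p s ih =>
    rw [Multiset.map_cons, Multiset.sum_cons]
    have h1 := h p (Multiset.mem_cons_self p s)
    have h2 := ih (fun q hq => h q (Multiset.mem_cons_of_mem hq))
    omega

lemma sumTail_erase (hr : (r : ℕ) ∈ lam) (k : ℕ) :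
    sumTail lam k = sumTail (lam.erase r) k + (r - k) := by
  conv_lhs => rw [← Multiset.cons_erase hr]
  unfold sumTail
  rw [Multiset.map_cons, Multiset.sum_cons]
  omega

lemma sumTail_add (s t : Multiset ℕ) (k : ℕ) :
    sumTail (s + t) k = sumTail s k + sumTail t k := by
  unfold sumTail
  rw [Multiset.map_add, Multiset.sum_add]

/-- Every part occurring anywhere is at most `lam.sum`. -/
lemma conf_all (hconf : IsConfig lam R ν) (hsize : lam.sum = sizeR R) :
    ∀ k, (ν k).sum + cRect R k = sumTail lam k := by
  intro k
  cases k with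
  | zero =>
    rw [hconf.1, sumTail_zero_eq]
    show 0 + cRect R 0 = lam.sum
    rw [hsize]
    unfold cRect sizeR
    rw [zero_add]
    congr 1
    apply List.map_congr_left
    intro a _
    show a.2 * (a.1 - 0) = a.1 * a.2
    rw [Nat.sub_zero, Nat.mul_comm]
  | succ i => exact hconf.2.2 (i+1) (by omega)

lemma part_le_lamsum (hconf : IsConfig lam R ν) (hsize : lam.sum = sizeR R)
    {j p : ℕ} (hp : p ∈ ν j) : p ≤ lam.sum := by
  have h1 : p ≤ (ν j).sum := Multiset.single_le_sum (fun x _ => Nat.zero_le x) p hp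
  have h2 := conf_all hconf hsize j
  have h3 := sumTail_le_sum lam j
  omega

lemma xiR_part_le (hsize : lam.sum = sizeR R) {k p : ℕ} (hk : 1 ≤ k)
    (hp : p ∈ xiR R k) : p ≤ lam.sum := by
  unfold xiR at hp
  rw [Multiset.mem_coe, List.mem_map] at hp
  obtain ⟨a, ha, rfl⟩ := hp
  rw [List.mem_filter] at ha
  have hak : a.1 = k := by simpa using ha.2
  have h1 : a.1 * a.2 ≤ sizeR R := by
    unfold sizeR
    exact List.single_le_sum (fun x _ => Nat.zero_le x) _ (List.mem_map_of_mem ha.1)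
  have h2 : a.2 ≤ a.1 * a.2 := by
    calc a.2 = 1 * a.2 := (one_mul _).symm
    _ ≤ a.1 * a.2 := Nat.mul_le_mul_right _ (by omega)
  omega

lemma vacZ_large (hconf : IsConfig lam R ν) (hsize : lam.sum = sizeR R)
    {k : ℕ} (hk : 1 ≤ k) :
    vacZ R ν k lam.sum = (lamT lam k : ℤ) - (lamT lam (k+1) : ℤ) := by
  have q1 : Qn lam.sum (ν (k-1)) = (ν (k-1)).sum :=
    Qn_sum (fun p hp => part_le_lamsum hconf hsize hp)
  have q2 : Qn lam.sum (ν k) = (ν k).sum :=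
    Qn_sum (fun p hp => part_le_lamsum hconf hsize hp)
  have q3 : Qn lam.sum (ν (k+1)) = (ν (k+1)).sum :=
    Qn_sum (fun p hp => part_le_lamsum hconf hsize hp)
  have q4 : Qn lam.sum (xiR R k) = (xiR R k).sum :=
    Qn_sum (fun p hp => xiR_part_le hsize hk hp)
  have c1 := conf_all hconf hsize (k-1)
  have c2 := conf_all hconf hsize k
  have c3 := conf_all hconf hsize (k+1)
  have s1 := sumTail_succ lam (k-1)
  rw [show k - 1 + 1 = k by omega] at s1
  have s2 := sumTail_succ lam k
  have r1 := cRect_succ R (k-1)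
  rw [show k - 1 + 1 = k by omega] at r1
  have r2 := cRect_succ R k
  have e1 := eRect_succ R k
  unfold vacZ
  rw [q1, q2, q3, q4]
  omega

lemma lamsum_pos (hR : R ≠ []) (hlast : lastRect R = (1, μL)) (hμ : 1 ≤ μL)
    (hsize : lam.sum = sizeR R) : μL ≤ lam.sum := by
  have h1 : R.getLast? = some (R.getLast hR) := List.getLast?_eq_getLast hR
  have h2 : R.getLast hR = (1, μL) := by
    unfold lastRect at hlast
    rw [h1] at hlast
    simpa using hlast
  have h3 : (1, μL) ∈ R := h2 ▸ List.getLast_mem hR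
  have h4 : (1:ℕ) * μL ≤ sizeR R :=
    List.single_le_sum (fun x _ => Nat.zero_le x) _
      (List.mem_map_of_mem (f := fun r : Rect => r.1 * r.2) h3)
  omega

lemma ell_exists_top (hconf : IsConfig lam R ν) (hrig : IsRigging R ν J)
    (hsize : lam.sum = sizeR R) (hR : R ≠ []) (hlast : lastRect R = (1, μL))
    (hμ : 1 ≤ μL) : ∃ k, ellBar R ν J μL k = ⊤ := by
  have hK1 : 1 ≤ lam.sum := le_trans hμ (lamsum_pos hR hlast hμ hsize)
  obtain ⟨K', hK'⟩ : ∃ K', lam.sum = K' + 1 := ⟨lam.sum - 1, by omega⟩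
  have hν : (ν (K'+1)).sum = 0 := by
    have h1 := conf_all hconf hsize (K'+1)
    have h2 : sumTail lam (K'+1) = 0 :=
      sumTail_eq_zero lam (fun p hp => by
        have := Multiset.single_le_sum (fun x (_ : x ∈ lam) => Nat.zero_le x) p hp
        omega)
    omega
  refine ⟨K'+1, ?_⟩
  rw [ellBar_succ]
  have hempty : {m : ℕ∞ | ∃ n : ℕ, m = (n : ℕ∞) ∧ ellBar R ν J μL K' ≤ (n : ℕ∞) ∧
      Singular R ν J (K'+1) n} = ∅ := by
    rw [Set.eq_empty_iff_forall_notMem]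
    rintro m ⟨nn, rfl, -, hsing⟩
    have hc := singular_count hrig (by omega) hsing
    have hmem : nn ∈ ν (K'+1) := Multiset.count_pos.1 hc
    have hle : nn ≤ (ν (K'+1)).sum :=
      Multiset.single_le_sum (fun x _ => Nat.zero_le x) nn hmem
    have h0 : 0 ∉ ν (K'+1) := hconf.2.1 (K'+1)
    have hn1 : 1 ≤ nn := hsing.1
    have : nn = 0 := by omega
    exact h0 (this ▸ hmem)
  rw [hempty, sInf_empty]

end Arith


section Change
open Multiset

variable {lam : Multiset ℕ} {R : List Rect} {ν : ℕ → Multiset ℕ}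
  {J : ℕ → ℕ → Multiset ℕ} {μL : ℕ}

lemma getLast_eq (hR : R ≠ []) (hlast : lastRect R = (1, μL)) :
    R.getLast hR = (1, μL) := by
  have h1 : R.getLast? = some (R.getLast hR) := List.getLast?_eq_getLast hR
  unfold lastRect at hlast
  rw [h1] at hlast
  simpa using hlast

lemma R_decomp (hR : R ≠ []) (hlast : lastRect R = (1, μL)) :
    R = R.dropLast ++ [(1, μL)] := by
  conv_lhs => rw [← List.dropLast_append_getLast hR]
  rw [getLast_eq hR hlast]

lemma Rbar_eq (hlast : lastRect R = (1, μL)) :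
    Rbar R = R.dropLast ++ (if μL ≤ 1 then [] else [(1, μL - 1)]) := by
  unfold Rbar
  rw [hlast]

lemma xiR_append (l₁ l₂ : List Rect) (k : ℕ) :
    xiR (l₁ ++ l₂) k = xiR l₁ k + xiR l₂ k := by
  induction l₁ with
  | nil => rw [List.nil_append, xiR_nil, zero_add]
  | cons a l ih => rw [List.cons_append, xiR_cons, xiR_cons, ih, add_assoc]

lemma xiR_single (a : Rect) (k : ℕ) :
    xiR [a] k = (if a.1 = k then ({a.2} : Multiset ℕ) else 0) := by
  rw [show [a] = a :: ([] : List Rect) from rfl, xiR_cons, xiR_nil, add_zero]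

lemma xiR_Rbar_ne (hR : R ≠ []) (hlast : lastRect R = (1, μL)) {k : ℕ} (hk : k ≠ 1) :
    xiR (Rbar R) k = xiR R k := by
  have hz1 : xiR (if μL ≤ 1 then ([] : List Rect) else [(1, μL - 1)]) k = 0 := by
    by_cases h : μL ≤ 1
    · rw [if_pos h, xiR_nil]
    · rw [if_neg h, xiR_single, if_neg (by simpa using (Ne.symm hk))]
  have hz2 : xiR [((1 : ℕ), μL)] k = 0 := by
    rw [xiR_single, if_neg (by simpa using (Ne.symm hk))]
  rw [Rbar_eq hlast, xiR_append, hz1, add_zero]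
  conv_rhs => rw [R_decomp hR hlast]
  rw [xiR_append, hz2, add_zero]

lemma Qn_xiR_Rbar_one (hR : R ≠ []) (hlast : lastRect R = (1, μL)) (hμ : 1 ≤ μL)
    {n : ℕ} (hn : 1 ≤ n) :
    (Qn n (xiR (Rbar R) 1) : ℤ) = (Qn n (xiR R 1) : ℤ) - indZ (μL : ℕ∞) n := by
  rw [Rbar_eq hlast, xiR_append]
  conv_rhs => rw [R_decomp hR hlast, xiR_append]
  rw [Qn_add, Qn_add, xiR_single, if_pos rfl, Qn_singleton, indZ_coe]
  by_cases h : μL ≤ 1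
  · rw [if_pos h, xiR_nil, Qn_nil]
    have hμ1 : μL = 1 := by omega
    subst hμ1
    rw [if_pos hn, show min 1 n = 1 by omega]
    push_cast
    ring
  · rw [if_neg h, xiR_single, if_pos rfl, Qn_singleton]
    push_cast
    split_ifs with h2 <;> omega

lemma dbNu_zero' : dbNu R ν J μL 0 = ν 0 := by simp [dbNu]

lemma dbNu_top {k : ℕ} (h : ellBar R ν J μL k = ⊤) : dbNu R ν J μL k = ν k := by
  unfold dbNu
  by_cases hk : k = 0
  · rw [if_pos hk]
  · rw [if_neg hk, if_pos h]

lemma dbNu_fin {k m : ℕ} (hk : 1 ≤ k) (hm : ellBar R ν J μL k = (m:ℕ∞)) :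
    dbNu R ν J μL k = (ν k).erase m + (if m ≤ 1 then 0 else {m-1}) := by
  unfold dbNu
  rw [if_neg (by omega), if_neg (by rw [hm]; exact ENat.coe_ne_top m), hm]
  simp
  congr

lemma ell_fin_mem (hrig : IsRigging R ν J) {k m : ℕ} (hk : 1 ≤ k)
    (hm : ellBar R ν J μL k = (m:ℕ∞)) :
    m ∈ ν k ∧ Singular R ν J k m ∧ 1 ≤ m := by
  obtain ⟨m', hm', -, hsing⟩ := ellBar_spec' hk (by rw [hm]; exact ENat.coe_ne_top m)
  have : m' = m := by rw [hm] at hm'; exact_mod_cast hm'.symm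
  subst this
  exact ⟨Multiset.count_pos.1 (singular_count hrig hk hsing), hsing, hsing.1⟩

lemma Qn_dbNu (hrig : IsRigging R ν J) {j n : ℕ} (hj : 1 ≤ j) (hn : 1 ≤ n) :
    (Qn n (dbNu R ν J μL j) : ℤ) = (Qn n (ν j) : ℤ) - indZ (ellBar R ν J μL j) n := by
  cases h : ellBar R ν J μL j with
  | top => rw [dbNu_top h, indZ_top]; ring
  | coe m =>
    have hm : ellBar R ν J μL j = ((m : ℕ) : ℕ∞) := by exact_mod_cast h
    obtain ⟨hmem, -, hm1⟩ := ell_fin_mem hrig hj hm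
    rw [dbNu_fin hj hm]
    exact Qn_shorten hmem hm1 hn

lemma indZ_nonneg (e : ℕ∞) (n : ℕ) : 0 ≤ indZ e n := by
  unfold indZ; split_ifs <;> omega

lemma indZ_le_one (e : ℕ∞) (n : ℕ) : indZ e n ≤ 1 := by
  unfold indZ; split_ifs <;> omega

lemma indZ_anti {e e' : ℕ∞} (h : e ≤ e') (n : ℕ) : indZ e' n ≤ indZ e n := by
  unfold indZ
  split_ifs with h1 h2
  · omega
  · exact absurd (le_trans h h1) h2
  · omega
  · omega

lemma indZ_of_le {e : ℕ∞} {n : ℕ} (h : e ≤ (n:ℕ∞)) : indZ e n = 1 := if_pos h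

lemma indZ_of_gt {e : ℕ∞} {n : ℕ} (h : ¬ e ≤ (n:ℕ∞)) : indZ e n = 0 := if_neg h

/-- Change of vacancy numbers under `δ̄`. -/
lemma vacZ_dbNu (hrig : IsRigging R ν J) (hR : R ≠ []) (hlast : lastRect R = (1, μL))
    (hμ : 1 ≤ μL) {k n : ℕ} (hk : 1 ≤ k) (hn : 1 ≤ n) :
    vacZ (Rbar R) (dbNu R ν J μL) k n = vacZ R ν k n
      - indZ (ellBar R ν J μL (k-1)) n + 2 * indZ (ellBar R ν J μL k) n
      - indZ (ellBar R ν J μL (k+1)) n := by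
  unfold vacZ
  have h2 := Qn_dbNu (μL := μL) hrig hk hn
  have h3 := Qn_dbNu (μL := μL) hrig (by omega : 1 ≤ k + 1) hn
  rcases Nat.lt_or_ge k 2 with hk2 | hk2
  · have hk1 : k = 1 := by omega
    subst hk1
    have h0 : dbNu R ν J μL (1-1) = ν (1-1) := dbNu_zero'
    have hξ := Qn_xiR_Rbar_one hR hlast hμ hn
    have he0 : indZ (ellBar R ν J μL (1-1)) n = indZ ((μL : ℕ∞)) n := rfl
    rw [h0, h2, h3, hξ, he0]
    ring
  · have h1 := Qn_dbNu (μL := μL) hrig (by omega : 1 ≤ k - 1) hn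
    have hξ : xiR (Rbar R) k = xiR R k := xiR_Rbar_ne hR hlast (by omega)
    rw [h1, h2, h3, hξ]
    ring

end Change


section Delta
open Multiset

variable {lam : Multiset ℕ} {R : List Rect} {ν : ℕ → Multiset ℕ}
  {J : ℕ → ℕ → Multiset ℕ} {μL : ℕ}

lemma cRect_append (l₁ l₂ : List Rect) (k : ℕ) :
    cRect (l₁ ++ l₂) k = cRect l₁ k + cRect l₂ k := by
  unfold cRect
  rw [List.map_append, List.sum_append]

lemma cRect_Rbar (hR : R ≠ []) (hlast : lastRect R = (1, μL)) {k : ℕ} (hk : 1 ≤ k) :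
    cRect (Rbar R) k = cRect R k := by
  rw [Rbar_eq hlast, cRect_append]
  conv_rhs => rw [R_decomp hR hlast]
  rw [cRect_append]
  congr 1
  have h1 : cRect [((1:ℕ), μL)] k = 0 := by
    unfold cRect
    simp only [List.map_cons, List.map_nil, List.sum_cons, List.sum_nil]
    have : (1:ℕ) - k = 0 := by omega
    simp [this]
  rw [h1]
  by_cases h : μL ≤ 1
  · rw [if_pos h]; rfl
  · rw [if_neg h]
    unfold cRect
    simp only [List.map_cons, List.map_nil, List.sum_cons, List.sum_nil]
    have : (1:ℕ) - k = 0 := by omega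
    simp [this]

/-- Admissibility of `δ̄(ν,J)`. -/
lemma dbNu_admissible (hadm : Admissible R ν) (hrig : IsRigging R ν J)
    (hR : R ≠ []) (hlast : lastRect R = (1, μL)) (hμ : 1 ≤ μL) :
    Admissible (Rbar R) (dbNu R ν J μL) := by
  intro k n hk hn
  rw [vacZ_dbNu hrig hR hlast hμ hk hn]
  have hP := hadm k n hk hn
  have hmono1 : ellBar R ν J μL (k-1) ≤ ellBar R ν J μL k := ellBar_mono (by omega)
  have hmono2 : ellBar R ν J μL k ≤ ellBar R ν J μL (k+1) := ellBar_mono (by omega)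
  by_cases h1 : ellBar R ν J μL (k-1) ≤ (n:ℕ∞)
  · by_cases h2 : ellBar R ν J μL k ≤ (n:ℕ∞)
    · rw [indZ_of_le h1, indZ_of_le h2]
      have h3 := indZ_le_one (ellBar R ν J μL (k+1)) n
      linarith
    · have hkey := keyF1 hadm hrig hR hlast hμ hk hn h1 (not_le.1 h2)
      rw [indZ_of_le h1, indZ_of_gt h2,
        indZ_of_gt (fun hc => h2 (le_trans hmono2 hc))]
      linarith
  · rw [indZ_of_gt h1, indZ_of_gt (fun hc => h1 (le_trans hmono1 hc)),
      indZ_of_gt (fun hc => h1 (le_trans (le_trans hmono1 hmono2) hc))]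
    linarith

lemma dbNu_sum (hrig : IsRigging R ν J) {k : ℕ} (hk : 1 ≤ k) :
    (dbNu R ν J μL k).sum + (if ellBar R ν J μL k = ⊤ then 0 else 1) = (ν k).sum := by
  by_cases htop : ellBar R ν J μL k = ⊤
  · rw [dbNu_top htop, if_pos htop, add_zero]
  · obtain ⟨m, hm0⟩ := WithTop.ne_top_iff_exists.1 htop
    have hm : ellBar R ν J μL k = (m:ℕ∞) := by exact_mod_cast hm0.symm
    obtain ⟨hmem, -, hm1⟩ := ell_fin_mem hrig hk hm
    rw [dbNu_fin hk hm,
      if_neg (show ¬ ellBar R ν J μL k = ⊤ by rw [hm]; exact ENat.coe_ne_top m)]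
    rw [Multiset.sum_add]
    have hsum : (ν k).sum = m + ((ν k).erase m).sum := by
      conv_lhs => rw [← Multiset.cons_erase hmem]
      rw [Multiset.sum_cons]
    by_cases h1 : m ≤ 1
    · rw [if_pos h1]
      simp only [Multiset.sum_zero]
      omega
    · rw [if_neg h1]
      simp only [Multiset.sum_singleton]
      omega

/-- Singular strings of the image `δ̄(ν,J)` below `ℓ̄^{(k+1)}` have length `< ℓ̄^{(k)}`. -/
lemma out_singular_lt (hadm : Admissible R ν) (hrig : IsRigging R ν J)
    (hR : R ≠ []) (hlast : lastRect R = (1, μL)) (hμ : 1 ≤ μL)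
    {k s : ℕ} (hk : 1 ≤ k) (hs : 1 ≤ s)
    (hmem : natVac (Rbar R) (dbNu R ν J μL) k s ∈ dbJ R ν J μL k s)
    (hlt : (s:ℕ∞) < ellBar R ν J μL (k+1)) :
    (s:ℕ∞) < ellBar R ν J μL k := by
  by_contra hcon
  push_neg at hcon
  have hform := vacZ_dbNu hrig hR hlast hμ hk hs
  have i1 : indZ (ellBar R ν J μL (k-1)) s = 1 :=
    indZ_of_le (le_trans (ellBar_mono (by omega)) hcon)
  have i2 : indZ (ellBar R ν J μL k) s = 1 := indZ_of_le hcon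
  have i3 : indZ (ellBar R ν J μL (k+1)) s = 0 := indZ_of_gt (not_le.2 hlt)
  rw [i1, i2, i3] at hform
  have hadmbar := dbNu_admissible hadm hrig hR hlast hμ k s hk hs
  have hnv : (natVac (Rbar R) (dbNu R ν J μL) k s : ℤ)
      = vacZ (Rbar R) (dbNu R ν J μL) k s := Int.toNat_of_nonneg hadmbar
  have hx : natVac (Rbar R) (dbNu R ν J μL) k s ∈ J k s := by
    unfold dbJ at hmem
    rw [if_neg (by omega)] at hmem
    by_cases hE1 : ellBar R ν J μL k = (s:ℕ∞)
    · rw [if_pos hE1] at hmem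
      exact Multiset.mem_of_mem_erase hmem
    · rw [if_neg hE1] at hmem
      have hE2 : ¬ ellBar R ν J μL k = ((s+1:ℕ):ℕ∞) := by
        intro h
        rw [h] at hcon
        have : s + 1 ≤ s := by exact_mod_cast hcon
        omega
      rw [if_neg hE2] at hmem
      exact hmem
  have hb := (hrig.2 k s hk hs).2 _ hx
  rw [hnv, hform] at hb
  have hP := hadm k s hk hs
  linarith

/-- The shortened string is singular in the image. -/
lemma out_singular_witness {k m : ℕ} (hk : 1 ≤ k) (hm : 2 ≤ m)
    (hE : ellBar R ν J μL k = ((m:ℕ):ℕ∞)) :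
    natVac (Rbar R) (dbNu R ν J μL) k (m-1) ∈ dbJ R ν J μL k (m-1) := by
  unfold dbJ
  rw [if_neg (by omega)]
  rw [if_neg (by
    rw [hE]
    intro h
    have : m = m - 1 := by exact_mod_cast h
    omega)]
  rw [if_pos (by rw [show m - 1 + 1 = m by omega]; exact hE)]
  exact Multiset.mem_add.2 (Or.inr (Multiset.mem_singleton_self _))

end Delta

/-- Proposition: `δ̄` is a well-defined injection.  Let the
last rectangle of `R` be a single column of height `μ_L` and
`(ν,J) ∈ RC(λ^t;R^t)`.  Let `r` be the least index with `ℓ̄^{(r)} = ∞`.  Then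
(a) `λ^t_r > λ^t_{r+1}`, so removing the corner cell in column `r` of `λ`
gives a partition `ρ ⋖ λ`; (b) `δ̄(ν,J) ∈ RC(ρ^t; R̄^t)`; (c) `δ̄` is
injective on `RC(λ^t;R^t)`. -/
theorem statement10 (lam : Multiset ℕ) (R : List Rect) (μL : ℕ)
    (hlam : 0 ∉ lam) (hsize : lam.sum = sizeR R)
    (hR : R ≠ []) (hlast : lastRect R = (1, μL)) (hμ : 1 ≤ μL)
    (ν : ℕ → Multiset ℕ) (J : ℕ → ℕ → Multiset ℕ) (hRC : IsRC lam R ν J) :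
    (∃ r : ℕ, ellBar R ν J μL r = ⊤ ∧ (∀ k < r, ellBar R ν J μL k ≠ ⊤) ∧
      lamT lam (r+1) < lamT lam r ∧
      IsRC ((lam.erase r) + (if r ≤ 1 then 0 else {r - 1})) (Rbar R)
        (dbNu R ν J μL) (dbJ R ν J μL)) ∧
    (∀ p q, p ∈ RCset lam R → q ∈ RCset lam R →
      dbPair R μL p = dbPair R μL q → p = q) := by
  obtain ⟨hconf, hadm, hrig⟩ := hRC
  have hex : ∃ k, ellBar R ν J μL k = ⊤ := ell_exists_top hconf hrig hsize hR hlast hμ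
  have hr : ellBar R ν J μL (Nat.find hex) = ⊤ := Nat.find_spec hex
  have hrmin : ∀ k < Nat.find hex, ellBar R ν J μL k ≠ ⊤ := fun k hk => Nat.find_min hex hk
  set r := Nat.find hex with hrdef
  have hr1 : 1 ≤ r := by
    rcases Nat.eq_zero_or_pos r with h0 | h1
    · exfalso
      rw [h0] at hr
      exact (ENat.coe_ne_top μL) hr
    · exact h1
  have htopge : ∀ k, r ≤ k → ellBar R ν J μL k = ⊤ := fun k hk =>
    top_le_iff.1 (hr ▸ ellBar_mono hk)
  have hμsum : μL ≤ lam.sum := lamsum_pos hR hlast hμ hsize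
  have hNpos : 1 ≤ lam.sum := le_trans hμ hμsum
  -- part (a)
  have hprevle : ellBar R ν J μL (r-1) ≤ ((lam.sum : ℕ):ℕ∞) := by
    obtain ⟨m, hm0⟩ := WithTop.ne_top_iff_exists.1 (hrmin (r-1) (by omega))
    have hm : ellBar R ν J μL (r-1) = (m:ℕ∞) := by exact_mod_cast hm0.symm
    rw [hm]
    have hmle : m ≤ lam.sum := by
      rcases Nat.lt_or_ge r 2 with h2 | h2
      · have hz : ellBar R ν J μL (r-1) = ((μL:ℕ):ℕ∞) := by
          rw [show r - 1 = 0 by omega]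
          rfl
        rw [hm] at hz
        have : m = μL := by exact_mod_cast hz
        omega
      · obtain ⟨hmem, -, -⟩ := ell_fin_mem hrig (show 1 ≤ r-1 by omega) hm
        exact part_le_lamsum hconf hsize hmem
    exact_mod_cast hmle
  have hkey := keyF1 hadm hrig hR hlast hμ hr1 hNpos hprevle
    (by rw [hr]; exact lt_top_iff_ne_top.2 (ENat.coe_ne_top _))
  have hlarge := vacZ_large hconf hsize hr1
  have haT : lamT lam (r+1) < lamT lam r := by
    rw [hlarge] at hkey
    omega
  have hrmem : r ∈ lam := by
    have h1 : lamT lam r = lamT lam (r+1) + lam.count r := by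
      rw [lamT_eq_acol, lamT_eq_acol]
      exact acol_succ_add_count lam r
    have : 0 < lam.count r := by omega
    exact Multiset.count_pos.1 this
  -- part (b) : configuration
  have hνbar0 : dbNu R ν J μL 0 = 0 := by rw [dbNu_zero']; exact hconf.1
  have hno0 : ∀ k, 0 ∉ dbNu R ν J μL k := by
    intro k
    by_cases hk : 1 ≤ k
    · by_cases htop : ellBar R ν J μL k = ⊤
      · rw [dbNu_top htop]
        exact hconf.2.1 k
      · obtain ⟨m, hm0⟩ := WithTop.ne_top_iff_exists.1 htop
        have hm : ellBar R ν J μL k = (m:ℕ∞) := by exact_mod_cast hm0.symm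
        obtain ⟨hmem, -, hm1⟩ := ell_fin_mem hrig hk hm
        rw [dbNu_fin hk hm]
        intro hmem0
        rcases Multiset.mem_add.1 hmem0 with h | h
        · exact hconf.2.1 k (Multiset.mem_of_mem_erase h)
        · by_cases h1 : m ≤ 1
          · rw [if_pos h1] at h
            exact absurd h (Multiset.notMem_zero 0)
          · rw [if_neg h1] at h
            have := Multiset.mem_singleton.1 h
            omega
    · have hk0 : k = 0 := by omega
      rw [hk0, hνbar0]
      exact Multiset.notMem_zero 0
  have hsumbar : ∀ k, 1 ≤ k →
      (dbNu R ν J μL k).sum + (if k < r then 1 else 0) = (ν k).sum := by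
    intro k hk
    have hds := dbNu_sum (μL := μL) hrig hk
    by_cases hkr : k < r
    · rw [if_pos hkr]
      rw [if_neg (hrmin k hkr)] at hds
      omega
    · rw [if_neg hkr]
      rw [if_pos (htopge k (by omega))] at hds
      omega
  have hsumTailρ : ∀ k, 1 ≤ k →
      sumTail (lam.erase r + (if r ≤ 1 then 0 else {r-1})) k + (if k < r then 1 else 0)
        = sumTail lam k := by
    intro k hk
    rw [sumTail_add]
    have he := sumTail_erase hrmem k
    by_cases h1 : r ≤ 1
    · rw [if_pos h1]
      have hst0 : sumTail (0 : Multiset ℕ) k = 0 := by simp [sumTail]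
      rw [hst0, if_neg (by omega : ¬ k < r)]
      omega
    · rw [if_neg h1]
      have hst1 : sumTail ({r-1} : Multiset ℕ) k = (r-1) - k := by simp [sumTail]
      rw [hst1]
      split_ifs with h2 <;> omega
  have hconfbar : IsConfig (lam.erase r + (if r ≤ 1 then 0 else {r-1})) (Rbar R)
      (dbNu R ν J μL) := by
    refine ⟨hνbar0, hno0, ?_⟩
    intro k hk
    have h1 := hsumbar k hk
    have h2 := hsumTailρ k hk
    have h3 := conf_all hconf hsize k
    show (dbNu R ν J μL k).sum + cRect (Rbar R) k = _
    rw [cRect_Rbar hR hlast hk]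
    have h4 : (ν k).sum + cRect R k = sumTail lam k := h3
    omega
  -- part (b) : admissibility
  have hadmbar : Admissible (Rbar R) (dbNu R ν J μL) :=
    dbNu_admissible hadm hrig hR hlast hμ
  -- part (b) : rigging
  have hrigbar : IsRigging (Rbar R) (dbNu R ν J μL) (dbJ R ν J μL) := by
    constructor
    · intro k n hkn
      unfold dbJ
      rw [if_pos hkn]
      exact hrig.1 k n hkn
    · intro k n hk hn
      have hform := vacZ_dbNu hrig hR hlast hμ hk hn
      have hmono1 : ellBar R ν J μL (k-1) ≤ ellBar R ν J μL k := ellBar_mono (by omega)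
      have hmono2 : ellBar R ν J μL k ≤ ellBar R ν J μL (k+1) := ellBar_mono (by omega)
      have hPadm := hadm k n hk hn
      have hPbar := hadmbar k n hk hn
      have hcard := (hrig.2 k n hk hn).1
      have hbound := (hrig.2 k n hk hn).2
      have hJdef : dbJ R ν J μL k n =
          (if ellBar R ν J μL k = (n:ℕ∞) then (J k n).erase (natVac R ν k n)
          else if ellBar R ν J μL k = ((n+1:ℕ):ℕ∞) then
            (J k n) + {natVac (Rbar R) (dbNu R ν J μL) k n}
          else J k n) := by
        unfold dbJ
        rw [if_neg (by omega : ¬ (k = 0 ∨ n = 0))]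
      by_cases hE1 : ellBar R ν J μL k = (n:ℕ∞)
      · rw [hJdef, if_pos hE1]
        obtain ⟨hmem, hsing, -⟩ := ell_fin_mem hrig hk hE1
        constructor
        · rw [Multiset.card_erase_of_mem hsing.2, hcard]
          rw [dbNu_fin hk hE1, mpart_eq_count, mpart_eq_count, Multiset.count_add,
            Multiset.count_erase_self]
          have hc2 : Multiset.count n (if n ≤ 1 then (0:Multiset ℕ) else {n-1}) = 0 := by
            by_cases h1 : n ≤ 1
            · rw [if_pos h1]
              simp
            · rw [if_neg h1, Multiset.count_singleton, if_neg (by omega : ¬ n = n - 1)]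
          rw [hc2]
          have := Multiset.count_pos.2 hmem
          simp only [Nat.pred_eq_sub_one]
          omega
        · intro x hx
          have hxJ := Multiset.mem_of_mem_erase hx
          have hb := hbound x hxJ
          rw [hform, indZ_of_le (le_of_eq hE1)]
          have i1a := indZ_le_one (ellBar R ν J μL (k-1)) n
          have i1b := indZ_nonneg (ellBar R ν J μL (k-1)) n
          have i3a := indZ_le_one (ellBar R ν J μL (k+1)) n
          have i3b := indZ_nonneg (ellBar R ν J μL (k+1)) n
          linarith
      · by_cases hE2 : ellBar R ν J μL k = ((n+1:ℕ):ℕ∞)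
        · rw [hJdef, if_neg hE1, if_pos hE2]
          obtain ⟨hmem, hsing, -⟩ := ell_fin_mem hrig hk hE2
          have hi2 : indZ (ellBar R ν J μL k) n = 0 := by
            refine indZ_of_gt ?_
            rw [hE2]
            intro hc
            have : n + 1 ≤ n := by exact_mod_cast hc
            omega
          have hi3 : indZ (ellBar R ν J μL (k+1)) n = 0 := by
            refine indZ_of_gt (fun hc => ?_)
            have h5 := le_trans hmono2 hc
            rw [hE2] at h5
            have : n + 1 ≤ n := by exact_mod_cast h5
            omega
          constructor
          · rw [Multiset.card_add, Multiset.card_singleton, hcard]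
            rw [dbNu_fin hk hE2, mpart_eq_count, mpart_eq_count, Multiset.count_add,
              Multiset.count_erase_of_ne (by omega : n ≠ n+1),
              if_neg (by omega : ¬ n + 1 ≤ 1), show n + 1 - 1 = n by omega,
              Multiset.count_singleton, if_pos rfl]
          · intro x hx
            rcases Multiset.mem_add.1 hx with hxJ | hxnew
            · by_cases h1 : ellBar R ν J μL (k-1) ≤ (n:ℕ∞)
              · have hns : ¬ Singular R ν J k n := by
                  intro hsg
                  have h6 := ellBar_le' hk hsg h1
                  rw [hE2] at h6
                  have : n + 1 ≤ n := by exact_mod_cast h6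
                  omega
                have hxb := label_le_sub_one hrig hk hn hns hxJ
                rw [hform, indZ_of_le h1, hi2, hi3]
                linarith
              · rw [hform, indZ_of_gt h1, hi2, hi3]
                have := hbound x hxJ
                linarith
            · have hxeq : x = natVac (Rbar R) (dbNu R ν J μL) k n :=
                Multiset.mem_singleton.1 hxnew
              rw [hxeq]
              exact le_of_eq (Int.toNat_of_nonneg hPbar)
        · rw [hJdef, if_neg hE1, if_neg hE2]
          constructor
          · rw [hcard]
            show mpart n (ν k) = mpart n (dbNu R ν J μL k)
            by_cases htop : ellBar R ν J μL k = ⊤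
            · rw [dbNu_top htop]
            · obtain ⟨m, hm0⟩ := WithTop.ne_top_iff_exists.1 htop
              have hm : ellBar R ν J μL k = (m:ℕ∞) := by exact_mod_cast hm0.symm
              rw [dbNu_fin hk hm, mpart_eq_count, mpart_eq_count, Multiset.count_add]
              have hmn : ¬ m = n := fun h => hE1 (h ▸ hm)
              rw [Multiset.count_erase_of_ne (fun h => hmn h.symm)]
              have hz : Multiset.count n (if m ≤ 1 then (0:Multiset ℕ) else {m-1}) = 0 := by
                by_cases h1 : m ≤ 1
                · rw [if_pos h1]
                  simp
                · rw [if_neg h1, Multiset.count_singleton]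
                  refine if_neg (fun h => ?_)
                  have hmn1 : m = n + 1 := by omega
                  exact hE2 (hmn1 ▸ hm)
              rw [hz]
              omega
          · intro x hx
            have hb := hbound x hx
            by_cases h1 : ellBar R ν J μL (k-1) ≤ (n:ℕ∞)
            · by_cases h2 : ellBar R ν J μL k ≤ (n:ℕ∞)
              · rw [hform, indZ_of_le h1, indZ_of_le h2]
                have i3a := indZ_le_one (ellBar R ν J μL (k+1)) n
                have i3b := indZ_nonneg (ellBar R ν J μL (k+1)) n
                linarith
              · have hns : ¬ Singular R ν J k n := fun hsg => h2 (ellBar_le' hk hsg h1)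
                have hxb := label_le_sub_one hrig hk hn hns hx
                have hi3 : indZ (ellBar R ν J μL (k+1)) n = 0 :=
                  indZ_of_gt (fun hc => h2 (le_trans hmono2 hc))
                rw [hform, indZ_of_le h1, indZ_of_gt h2, hi3]
                linarith
            · rw [hform, indZ_of_gt h1, indZ_of_gt (fun hc => h1 (le_trans hmono1 hc)),
                indZ_of_gt (fun hc => h1 (le_trans (le_trans hmono1 hmono2) hc))]
              linarith
  constructor
  · exact ⟨r, hr, hrmin, haT, hconfbar, hadmbar, hrigbar⟩
  · rintro ⟨ν1, J1⟩ ⟨ν2, J2⟩ hp hq heq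
    obtain ⟨hconf1, hadm1, hrig1⟩ := hp
    obtain ⟨hconf2, hadm2, hrig2⟩ := hq
    dsimp only at hconf1 hadm1 hrig1 hconf2 hadm2 hrig2
    have hN : dbNu R ν1 J1 μL = dbNu R ν2 J2 μL := congrArg Prod.fst heq
    have hJe : dbJ R ν1 J1 μL = dbJ R ν2 J2 μL := congrArg Prod.snd heq
    have htopiff : ∀ k, 1 ≤ k →
        (ellBar R ν1 J1 μL k = ⊤ ↔ ellBar R ν2 J2 μL k = ⊤) := by
      intro k hk
      have h1 := dbNu_sum (μL := μL) hrig1 hk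
      have h2 := dbNu_sum (μL := μL) hrig2 hk
      have hs : (ν1 k).sum = (ν2 k).sum := by
        have c1 := conf_all hconf1 hsize k
        have c2 := conf_all hconf2 hsize k
        omega
      rw [congrFun hN k] at h1
      constructor <;> intro h <;> by_contra hc
      · rw [if_pos h] at h1
        rw [if_neg hc] at h2
        omega
      · rw [if_pos h] at h2
        rw [if_neg hc] at h1
        omega
    have hstep : ∀ k, ellBar R ν1 J1 μL (k+1) = ellBar R ν2 J2 μL (k+1) →
        ellBar R ν1 J1 μL k = ellBar R ν2 J2 μL k := by
      intro k ih
      by_cases hk : 1 ≤ k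
      · by_cases htop : ellBar R ν1 J1 μL k = ⊤
        · rw [htop, ((htopiff k hk).1 htop).symm]
        · have htop2 : ellBar R ν2 J2 μL k ≠ ⊤ := fun h => htop ((htopiff k hk).2 h)
          obtain ⟨m1, hm1'⟩ := WithTop.ne_top_iff_exists.1 htop
          have hm1 : ellBar R ν1 J1 μL k = (m1:ℕ∞) := by exact_mod_cast hm1'.symm
          obtain ⟨m2, hm2'⟩ := WithTop.ne_top_iff_exists.1 htop2
          have hm2 : ellBar R ν2 J2 μL k = (m2:ℕ∞) := by exact_mod_cast hm2'.symm
          have hm1pos : 1 ≤ m1 := (ell_fin_mem hrig1 hk hm1).2.2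
          have hm2pos : 1 ≤ m2 := (ell_fin_mem hrig2 hk hm2).2.2
          have h21 : 2 ≤ m2 → m2 ≤ m1 := by
            intro h2
            have hwit := out_singular_witness (μL := μL) hk h2 hm2
            rw [← hJe, ← hN] at hwit
            have hlt : ((m2-1:ℕ):ℕ∞) < ellBar R ν1 J1 μL (k+1) := by
              rw [ih]
              calc ((m2-1:ℕ):ℕ∞) < (m2:ℕ∞) := by
                    exact_mod_cast (by omega : m2 - 1 < m2)
              _ = ellBar R ν2 J2 μL k := hm2.symm
              _ ≤ ellBar R ν2 J2 μL (k+1) := ellBar_mono (by omega)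
            have hres := out_singular_lt hadm1 hrig1 hR hlast hμ hk (by omega) hwit hlt
            rw [hm1] at hres
            have : m2 - 1 < m1 := by exact_mod_cast hres
            omega
          have h12 : 2 ≤ m1 → m1 ≤ m2 := by
            intro h2
            have hwit := out_singular_witness (μL := μL) hk h2 hm1
            rw [hJe, hN] at hwit
            have hlt : ((m1-1:ℕ):ℕ∞) < ellBar R ν2 J2 μL (k+1) := by
              rw [← ih]
              calc ((m1-1:ℕ):ℕ∞) < (m1:ℕ∞) := by
                    exact_mod_cast (by omega : m1 - 1 < m1)
              _ = ellBar R ν1 J1 μL k := hm1.symm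
              _ ≤ ellBar R ν1 J1 μL (k+1) := ellBar_mono (by omega)
            have hres := out_singular_lt hadm2 hrig2 hR hlast hμ hk (by omega) hwit hlt
            rw [hm2] at hres
            have : m1 - 1 < m2 := by exact_mod_cast hres
            omega
          rw [hm1, hm2]
          have : m1 = m2 := by omega
          rw [this]
      · have hk0 : k = 0 := by omega
        rw [hk0]
        rfl
    have hell : ∀ k, ellBar R ν1 J1 μL k = ellBar R ν2 J2 μL k := by
      obtain ⟨K0, hK0top⟩ := ell_exists_top hconf1 hrig1 hsize hR hlast hμ
      have hKtop : ∀ k, max K0 1 ≤ k →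
          ellBar R ν1 J1 μL k = ⊤ ∧ ellBar R ν2 J2 μL k = ⊤ := by
        intro k hk
        have h1 : ellBar R ν1 J1 μL k = ⊤ :=
          top_le_iff.1 (hK0top ▸ ellBar_mono (le_trans (le_max_left K0 1) hk))
        exact ⟨h1, (htopiff k (le_trans (le_max_right K0 1) hk)).1 h1⟩
      have hdown : ∀ d k, max K0 1 ≤ k + d →
          ellBar R ν1 J1 μL k = ellBar R ν2 J2 μL k := by
        intro d
        induction d with
        | zero =>
          intro k hk
          rw [(hKtop k (by omega)).1, (hKtop k (by omega)).2]
        | succ d ih =>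
          intro k hk
          by_cases hK2 : max K0 1 ≤ k + d
          · exact ih k hK2
          · exact hstep k (ih (k+1) (by omega))
      intro k
      exact hdown (max K0 1) k (by omega)
    have hνeq : ν1 = ν2 := by
      funext k
      by_cases hk : 1 ≤ k
      · by_cases htop : ellBar R ν1 J1 μL k = ⊤
        · have e1 := dbNu_top (μL := μL) (J := J1) htop
          have e2 := dbNu_top (μL := μL) (J := J2) ((hell k).symm.trans htop)
          rw [← e1, ← e2, congrFun hN k]
        · obtain ⟨m, hm0⟩ := WithTop.ne_top_iff_exists.1 htop
          have hm1 : ellBar R ν1 J1 μL k = (m:ℕ∞) := by exact_mod_cast hm0.symm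
          have hm2 : ellBar R ν2 J2 μL k = (m:ℕ∞) := (hell k).symm.trans hm1
          have hmem1 := (ell_fin_mem hrig1 hk hm1).1
          have hmem2 := (ell_fin_mem hrig2 hk hm2).1
          have e1 := dbNu_fin (J := J1) hk hm1
          have e2 := dbNu_fin (J := J2) hk hm2
          have hX : (ν1 k).erase m = (ν2 k).erase m := by
            have hcc := congrFun hN k
            rw [e1, e2] at hcc
            exact add_right_cancel hcc
          calc ν1 k = m ::ₘ (ν1 k).erase m := (Multiset.cons_erase hmem1).symm
          _ = m ::ₘ (ν2 k).erase m := by rw [hX]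
          _ = ν2 k := Multiset.cons_erase hmem2
      · have hk0 : k = 0 := by omega
        rw [hk0, ← dbNu_zero' (R := R) (ν := ν1) (J := J1) (μL := μL),
          ← dbNu_zero' (R := R) (ν := ν2) (J := J2) (μL := μL), congrFun hN 0]
    have hJJ : J1 = J2 := by
      funext k n
      by_cases hkn : k = 0 ∨ n = 0
      · rw [hrig1.1 k n hkn, hrig2.1 k n hkn]
      · have hk : 1 ≤ k := by omega
        have hn : 1 ≤ n := by omega
        have hout := congrFun (congrFun hJe k) n
        by_cases hE1 : ellBar R ν1 J1 μL k = (n:ℕ∞)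
        · have hE1' : ellBar R ν2 J2 μL k = (n:ℕ∞) := (hell k).symm.trans hE1
          have hsing1 := (ell_fin_mem hrig1 hk hE1).2.1
          have hsing2 := (ell_fin_mem hrig2 hk hE1').2.1
          have e1 : dbJ R ν1 J1 μL k n = (J1 k n).erase (natVac R ν1 k n) := by
            unfold dbJ
            rw [if_neg hkn, if_pos hE1]
          have e2 : dbJ R ν2 J2 μL k n = (J2 k n).erase (natVac R ν2 k n) := by
            unfold dbJ
            rw [if_neg hkn, if_pos hE1']
          have hv : natVac R ν1 k n = natVac R ν2 k n := by rw [hνeq]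
          calc J1 k n = natVac R ν1 k n ::ₘ (J1 k n).erase (natVac R ν1 k n) :=
                (Multiset.cons_erase hsing1.2).symm
          _ = natVac R ν2 k n ::ₘ (J2 k n).erase (natVac R ν2 k n) := by
                rw [← e1, ← e2, hout, hv]
          _ = J2 k n := Multiset.cons_erase hsing2.2
        · have hE1' : ¬ ellBar R ν2 J2 μL k = (n:ℕ∞) := fun h => hE1 ((hell k).trans h)
          by_cases hE2 : ellBar R ν1 J1 μL k = ((n+1:ℕ):ℕ∞)
          · have hE2' : ellBar R ν2 J2 μL k = ((n+1:ℕ):ℕ∞) := (hell k).symm.trans hE2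
            have e1 : dbJ R ν1 J1 μL k n
                = J1 k n + {natVac (Rbar R) (dbNu R ν1 J1 μL) k n} := by
              unfold dbJ
              rw [if_neg hkn, if_neg hE1, if_pos hE2]
            have e2 : dbJ R ν2 J2 μL k n
                = J2 k n + {natVac (Rbar R) (dbNu R ν2 J2 μL) k n} := by
              unfold dbJ
              rw [if_neg hkn, if_neg hE1', if_pos hE2']
            rw [e1, e2, hN] at hout
            exact add_right_cancel hout
          · have hE2' : ¬ ellBar R ν2 J2 μL k = ((n+1:ℕ):ℕ∞) :=
              fun h => hE2 ((hell k).trans h)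
            have e1 : dbJ R ν1 J1 μL k n = J1 k n := by
              unfold dbJ
              rw [if_neg hkn, if_neg hE1, if_neg hE2]
            have e2 : dbJ R ν2 J2 μL k n = J2 k n := by
              unfold dbJ
              rw [if_neg hkn, if_neg hE1', if_neg hE2']
            rw [← e1, ← e2, hout]
    rw [Prod.mk.injEq]
    exact ⟨hνeq, hJJ⟩

end KSS
end

section
/- Take λ = (2,2) and R = ((1),(2,1)). Then for any choice of tableaux Z_1 of shape (1) and Z_2 of shape (2,1) in consecutive alphabets, |SLR(λ;Z)| = 1, yet there is no standard tableau S of shape λ satisfying the rectangle-criterion: for every pair of letters x,y in the alphabet of Z_2 with y immediately south (resp. west) of x in Z_2, y lies in a strictly lower row (resp. strictly further-west column) of S than x. -/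
namespace KSS

/-- Schensted row insertion of `x` into a row: returns new row and bumped entry. -/
def rowInsert (x : ℕ) : List ℕ → List ℕ × Option ℕ
  | [] => ([x], none)
  | y :: ys =>
    if x < y then (x :: ys, some y)
    else
      let p := rowInsert x ys
      (y :: p.1, p.2)

/-- Insert a letter into a tableau (list of rows) by Schensted insertion. -/
def insertTab : List (List ℕ) → ℕ → List (List ℕ)
  | [], x => [[x]]
  | r :: rs, x =>
    match rowInsert x r with
    | (r', none) => r' :: rs
    | (r', some y) => r' :: insertTab rs y

/-- The Schensted `P`-tableau of a word. -/
def Ptab (w : List ℕ) : List (List ℕ) := w.foldl insertTab []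

/-- Row-reading word of a tableau (bottom row first). -/
def word (T : List (List ℕ)) : List ℕ := T.reverse.flatten

def shape (T : List (List ℕ)) : List ℕ := T.map List.length

def numEntries (T : List (List ℕ)) : ℕ := T.flatten.length

/-- `lam` is a partition (weakly decreasing list of positive integers). -/
def IsPartitionL (lam : List ℕ) : Prop :=
  List.Chain' (fun a b => b ≤ a) lam ∧ ∀ x ∈ lam, 0 < x

/-- Columns strictly increase downwards. -/
def colStrict (T : List (List ℕ)) : Prop :=
  ∀ i j, j < (T.getD (i+1) []).length → (T.getD i []).getD j 0 < (T.getD (i+1) []).getD j 0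

/-- Standard tableau of shape `lam` with entries `a, a+1, …, a + |lam| - 1`. -/
def IsStdTabFrom (lam : List ℕ) (a : ℕ) (T : List (List ℕ)) : Prop :=
  shape T = lam ∧ T.flatten.Perm (List.range' a lam.sum) ∧
    (∀ r ∈ T, List.Chain' (· < ·) r) ∧ colStrict T

/-- Standard tableau of shape `lam` with entries `1, …, |lam|`. -/
def IsStdTab (lam : List ℕ) (T : List (List ℕ)) : Prop := IsStdTabFrom lam 1 T

/-- `P(T|_{[a,b]} - (a-1))`: restrict to the letters in `[a,b]`, subtract `a-1`,
and rectify (computed on the reading word). -/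
def resP (T : List (List ℕ)) (a b : ℕ) : List (List ℕ) :=
  Ptab (((word T).filter (fun x => decide (a ≤ x ∧ x ≤ b))).map (fun x => x - (a-1)))

/-- `S ↦ S^D = P(S|_{[2,N]} - 1)`. -/
def Dmap (T : List (List ℕ)) : List (List ℕ) := resP T 2 (numEntries T)

/-- `S ↦ S⁻`, removal of the maximal letter. -/
def minusT (T : List (List ℕ)) : List (List ℕ) := resP T 1 (numEntries T - 1)

/-- (0-based) row index of the row of `T` containing the letter `x`. -/
def rowOf (T : List (List ℕ)) (x : ℕ) : ℕ := T.findIdx (fun r => r.contains x)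

/-- (0-based) column index of the letter `x` in `T`. -/
def colOf (T : List (List ℕ)) (x : ℕ) : ℕ :=
  (T.getD (rowOf T x) []).findIdx (fun y => y == x)

/-- The (0-based) row index of the unique cell of `big/small` (a skew shape with one cell). -/
def diffRow (big small : List ℕ) : ℕ :=
  (List.range (big.length + 1)).findIdx (fun i => decide (small.getD i 0 < big.getD i 0))

/-- Schützenberger evacuation, via `S^ev = P(# word(S))` where `#` is the
reverse complement in the alphabet `[1,N]`. -/
def evacT (T : List (List ℕ)) : List (List ℕ) :=
  Ptab (((word T).map (fun x => numEntries T + 1 - x)).reverse)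
/-- `y` is immediately south of `x` in the tableau `Z`. -/
def ImmSouth (Z : List (List ℕ)) (x y : ℕ) : Prop :=
  ∃ i j, (Z.getD i []).getD j 0 = x ∧ j < (Z.getD i []).length ∧
    (Z.getD (i+1) []).getD j 0 = y ∧ j < (Z.getD (i+1) []).length

/-- `y` is immediately west of `x` in the tableau `Z`. -/
def ImmWest (Z : List (List ℕ)) (x y : ℕ) : Prop :=
  ∃ i j, (Z.getD i []).getD (j+1) 0 = x ∧ j + 1 < (Z.getD i []).length ∧
    (Z.getD i []).getD j 0 = y

/-- The rectangle-criterion of Remark \ref{funny compatible} for a standard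
tableau `S` relative to the filling `Z`: whenever `y` is immediately south
(resp. west) of `x` in `Z`, the letter `y` lies in a strictly lower row
(resp. strictly more western column) of `S` than `x`. -/
def RectCriterion (Z S : List (List ℕ)) : Prop :=
  (∀ x y, ImmSouth Z x y → rowOf S x < rowOf S y) ∧
  (∀ x y, ImmWest Z x y → colOf S y < colOf S x)


lemma std1 {Z : List (List ℕ)} (h : IsStdTabFrom [1] 1 Z) : Z = [[1]] := by
  obtain ⟨hsh, hperm, -, -⟩ := h
  rcases Z with _ | ⟨r0, _ | ⟨r1, Z⟩⟩ <;> simp [shape] at hsh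
  obtain ⟨a, rfl⟩ := List.length_eq_one_iff.mp hsh
  have := hperm.mem_iff (a := a)
  simp [List.range'] at this
  subst this; rfl

lemma std21 {Z : List (List ℕ)} (h : IsStdTabFrom [2,1] 2 Z) :
    Z = [[2,3],[4]] ∨ Z = [[2,4],[3]] := by
  obtain ⟨hsh, hperm, hrows, hcol⟩ := h
  rcases Z with _ | ⟨r0, _ | ⟨r1, _ | ⟨r2, Z⟩⟩⟩ <;> simp [shape] at hsh
  obtain ⟨h0, h1⟩ := hsh
  obtain ⟨a, b, rfl⟩ := List.length_eq_two.mp h0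
  obtain ⟨c, rfl⟩ := List.length_eq_one_iff.mp h1
  have hr : List.range' 2 ([2,1] : List ℕ).sum = [2,3,4] := by decide
  have hperm' : ([a,b,c] : List ℕ).Perm [2,3,4] := by rw [hr] at hperm; simpa using hperm
  have hsum := hperm'.sum_eq
  simp at hsum
  have hma : a = 2 ∨ a = 3 ∨ a = 4 := by
    have := (hperm'.mem_iff (a := a)).mp (by simp); simpa using this
  have hmb : b = 2 ∨ b = 3 ∨ b = 4 := by
    have := (hperm'.mem_iff (a := b)).mp (by simp); simpa using this
  have hmc : c = 2 ∨ c = 3 ∨ c = 4 := by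
    have := (hperm'.mem_iff (a := c)).mp (by simp); simpa using this
  have hab : a < b := by have := hrows [a,b] (by simp); simpa [List.Chain', List.isChain_pair] using this
  have hac : a < c := by have := hcol 0 0 (by simp); simpa using this
  have : (a = 2 ∧ b = 3 ∧ c = 4) ∨ (a = 2 ∧ b = 4 ∧ c = 3) := by omega
  rcases this with ⟨rfl, rfl, rfl⟩ | ⟨rfl, rfl, rfl⟩
  · left; rfl
  · right; rfl

lemma std22 {S : List (List ℕ)} (h : IsStdTab [2,2] S) :
    S = [[1,2],[3,4]] ∨ S = [[1,3],[2,4]] := by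
  obtain ⟨hsh, hperm, hrows, hcol⟩ := h
  rcases S with _ | ⟨r0, _ | ⟨r1, _ | ⟨r2, S⟩⟩⟩ <;> simp [shape] at hsh
  obtain ⟨h0, h1⟩ := hsh
  obtain ⟨a, b, rfl⟩ := List.length_eq_two.mp h0
  obtain ⟨c, d, rfl⟩ := List.length_eq_two.mp h1
  have hr : List.range' 1 ([2,2] : List ℕ).sum = [1,2,3,4] := by decide
  have hperm' : ([a,b,c,d] : List ℕ).Perm [1,2,3,4] := by rw [hr] at hperm; simpa using hperm
  have hsum := hperm'.sum_eq
  simp at hsum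
  have hnd : ([a,b,c,d] : List ℕ).Nodup := hperm'.nodup_iff.mpr (by decide)
  have hbc : b ≠ c := by simp [List.nodup_cons] at hnd; tauto
  have hma : a = 1 ∨ a = 2 ∨ a = 3 ∨ a = 4 := by
    have := (hperm'.mem_iff (a := a)).mp (by simp); simpa using this
  have hmb : b = 1 ∨ b = 2 ∨ b = 3 ∨ b = 4 := by
    have := (hperm'.mem_iff (a := b)).mp (by simp); simpa using this
  have hmc : c = 1 ∨ c = 2 ∨ c = 3 ∨ c = 4 := by
    have := (hperm'.mem_iff (a := c)).mp (by simp); simpa using this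
  have hmd : d = 1 ∨ d = 2 ∨ d = 3 ∨ d = 4 := by
    have := (hperm'.mem_iff (a := d)).mp (by simp); simpa using this
  have hab : a < b := by have := hrows [a,b] (by simp); simpa [List.Chain', List.isChain_pair] using this
  have hcd : c < d := by have := hrows [c,d] (by simp); simpa [List.Chain', List.isChain_pair] using this
  have hac : a < c := by have := hcol 0 0 (by simp); simpa using this
  have hbd : b < d := by have := hcol 0 1 (by simp); simpa using this
  have : (a = 1 ∧ b = 2 ∧ c = 3 ∧ d = 4) ∨ (a = 1 ∧ b = 3 ∧ c = 2 ∧ d = 4) := by omega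
  rcases this with ⟨rfl, rfl, rfl, rfl⟩ | ⟨rfl, rfl, rfl, rfl⟩
  · left; rfl
  · right; rfl

lemma colStrict_pair (r0 r1 : List ℕ)
    (h : ∀ j < r1.length, r0.getD j 0 < r1.getD j 0) : colStrict [r0, r1] := by
  intro i j hj
  match i with
  | 0 => exact h j (by simpa using hj)
  | n+1 =>
    simp only [List.getD_cons_succ] at hj
    simp [List.getD] at hj

/-- failure of the rectangle criterion for non-rectangular
shapes.  Take `λ = (2,2)` and `R = ((1),(2,1))`, with `Z₁` a standard tableau
of shape `(1)` on `{1}` and `Z₂` a standard tableau of shape `(2,1)` on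
`{2,3,4}`.  Then `|SLR(λ;Z)| = 1`, but no standard tableau `S` of shape `λ`
satisfies the rectangle-criterion relative to `Z₁` and `Z₂`. -/
theorem statement19 (Z1 Z2 : List (List ℕ))
    (hZ1 : IsStdTabFrom [1] 1 Z1) (hZ2 : IsStdTabFrom [2,1] 2 Z2) :
    ({S | IsStdTab [2,2] S ∧
        Ptab ((word S).filter (fun x => decide (x = 1))) = Z1 ∧
        Ptab ((word S).filter (fun x => decide (2 ≤ x ∧ x ≤ 4))) = Z2}.ncard = 1) ∧
    ¬ ∃ S, IsStdTab [2,2] S ∧ RectCriterion Z1 S ∧ RectCriterion Z2 S := by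
  obtain rfl := std1 hZ1
  rcases std21 hZ2 with rfl | rfl
  · constructor
    · have hset : {S | IsStdTab [2,2] S ∧
          Ptab ((word S).filter (fun x => decide (x = 1))) = [[1]] ∧
          Ptab ((word S).filter (fun x => decide (2 ≤ x ∧ x ≤ 4))) = [[2,3],[4]]}
          = {[[1,3],[2,4]]} := by
        ext S
        simp only [Set.mem_setOf_eq, Set.mem_singleton_iff]
        constructor
        · rintro ⟨hS, h1, h2⟩
          rcases std22 hS with rfl | rfl
          · exact absurd h2 (by decide)
          · rfl
        · rintro rfl
          exact ⟨⟨rfl, by decide, by intro r hr; fin_cases hr <;> norm_num [List.Chain', List.isChain_cons_cons], colStrict_pair _ _ (by decide)⟩,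
            by decide, by decide⟩
      rw [hset]
      exact Set.ncard_singleton _
    · rintro ⟨S, hS, -, hC⟩
      rcases std22 hS with rfl | rfl
      · have := hC.2 3 2 ⟨0, 0, by decide, by decide, by decide⟩
        exact absurd this (by decide)
      · have := hC.1 2 4 ⟨0, 0, by decide, by decide, by decide, by decide⟩
        exact absurd this (by decide)
  · constructor
    · have hset : {S | IsStdTab [2,2] S ∧
          Ptab ((word S).filter (fun x => decide (x = 1))) = [[1]] ∧
          Ptab ((word S).filter (fun x => decide (2 ≤ x ∧ x ≤ 4))) = [[2,4],[3]]}
          = {[[1,2],[3,4]]} := by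
        ext S
        simp only [Set.mem_setOf_eq, Set.mem_singleton_iff]
        constructor
        · rintro ⟨hS, h1, h2⟩
          rcases std22 hS with rfl | rfl
          · rfl
          · exact absurd h2 (by decide)
        · rintro rfl
          exact ⟨⟨rfl, by decide, by intro r hr; fin_cases hr <;> norm_num [List.Chain', List.isChain_cons_cons], colStrict_pair _ _ (by decide)⟩,
            by decide, by decide⟩
      rw [hset]
      exact Set.ncard_singleton _
    · rintro ⟨S, hS, -, hC⟩
      rcases std22 hS with rfl | rfl
      · have := hC.2 4 2 ⟨0, 0, by decide, by decide, by decide⟩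
        exact absurd this (by decide)
      · have := hC.1 2 3 ⟨0, 0, by decide, by decide, by decide, by decide⟩
        exact absurd this (by decide)


end KSS
end
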